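/- arXiv:2401.07734 — 6 statements merged into one kernel-verified Lean document; each statement's English description precedes it below -/
import Mathlib

section
/- Let ι be a countable type, let E ⊆ ℓ²(ι, ℝ) be compact, and let ν, ν' be finite Borel measures on ℓ²(ι, ℝ), each vanishing outside E. If for every finite multiset s over ι one has ∫ (Π_{i ∈ s} x_i) dν(x) = ∫ (Π_{i ∈ s} x_i) dν'(x) (where the product is taken with multiplicity, and the empty multiset gives equality of total masses), then ν = ν'. That is, a finite measure supported on a compact subset of ℓ²(ι, ℝ) is uniquely determined by its monomial moments. -/
open MeasureTheory
open scoped ENNReal BoundedContinuousFunction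

/-- The Hilbert space `ℓ²(ι, ℝ)`. -/
abbrev L2R (ι : Type) : Type := lp (fun _ : ι => ℝ) 2

noncomputable instance (ι : Type) : MeasurableSpace (L2R ι) := borel _

instance (ι : Type) : BorelSpace (L2R ι) := ⟨rfl⟩

/-- The coordinate evaluation as a continuous map on `ℓ²`. -/
noncomputable def coordCM (ι : Type) (i : ι) : C(L2R ι, ℝ) :=
  ⟨fun x => x i, by
    apply LipschitzWith.continuous (K := 1)
    intro x y
    rw [edist_dist, edist_dist]
    simp only [ENNReal.coe_one, one_mul]
    apply ENNReal.ofReal_le_ofReal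
    rw [dist_eq_norm, dist_eq_norm]
    exact (lp.norm_apply_le_norm (by norm_num) (x - y) i).trans_eq' (by simp)⟩

/-- Evaluation of a product of coordinate maps. -/
lemma coordCM_list_prod (ι : Type) (L : List ι) (x : L2R ι) :
    (L.map (coordCM ι)).prod x = (L.map fun i => x i).prod := by
  induction L with
  | nil => simp
  | cons i t ih => simp [ih, coordCM]

/-- A list of elements of the range of `f` is the image of a list. -/
lemma list_subset_range_exists {α β : Type*} (f : α → β) :
    ∀ l : List β, (∀ y ∈ l, y ∈ Set.range f) → ∃ L : List α, l = L.map f := by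
  intro l
  induction l with
  | nil => exact fun _ => ⟨[], rfl⟩
  | cons a t ih =>
    intro hl
    obtain ⟨i, hi⟩ := hl a List.mem_cons_self
    obtain ⟨L, hL⟩ := ih fun b hb => hl b (List.mem_cons_of_mem a hb)
    exact ⟨i :: L, by simp [hL, hi]⟩

set_option maxHeartbeats 1000000 in
set_option synthInstance.maxHeartbeats 400000 in
/-- A finite Borel measure supported on a compact subset `E` of `ℓ²(ι, ℝ)` (with `ι`
countable) is uniquely determined by its monomial moments: if two such measures have the
same moments `∫ ∏_{i ∈ s} x_i dν(x)` for every finite multiset `s` over `ι` (with the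
empty multiset giving equality of total masses), then they are equal. -/
theorem measure_eq_of_monomial_moments_eq (ι : Type) [Countable ι]
    (E : Set (L2R ι)) (hE : IsCompact E)
    (ν ν' : Measure (L2R ι)) [IsFiniteMeasure ν] [IsFiniteMeasure ν']
    (hν : ν Eᶜ = 0) (hν' : ν' Eᶜ = 0)
    (h : ∀ s : Multiset ι,
      (∫ x, (s.map fun i => x i).prod ∂ν) = ∫ x, (s.map fun i => x i).prod ∂ν') :
    ν = ν' := by
  classical
  have hEc : IsClosed E := hE.isClosed
  have hEm : MeasurableSet E := hEc.measurableSet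
  -- a.e. membership in E
  have haeν : ∀ᵐ x ∂ν, x ∈ E := by
    rw [ae_iff]
    simpa [Set.compl_def] using hν
  have haeν' : ∀ᵐ x ∂ν', x ∈ E := by
    rw [ae_iff]
    simpa [Set.compl_def] using hν'
  have hrν : ν.restrict E = ν := Measure.restrict_eq_self_of_ae_mem haeν
  have hrν' : ν'.restrict E = ν' := Measure.restrict_eq_self_of_ae_mem haeν'
  -- every continuous function is integrable w.r.t. ν and ν'
  have hint : ∀ (P : C(L2R ι, ℝ)) (μ : Measure (L2R ι)) [IsFiniteMeasure μ],
      μ.restrict E = μ → Integrable P μ := by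
    intro P μ _ hμ
    rw [← hμ]
    exact P.continuous.continuousOn.integrableOn_compact hE
  -- polynomials (elements of the subalgebra generated by coordinates) integrate equally
  have hpoly : ∀ P ∈ Algebra.adjoin ℝ (Set.range (coordCM ι)),
      (∫ x, P x ∂ν) = ∫ x, P x ∂ν' := by
    intro P hP
    have hP' : P ∈ Submodule.span ℝ
        ((Submonoid.closure (Set.range (coordCM ι)) : Submonoid C(L2R ι, ℝ)) :
          Set C(L2R ι, ℝ)) := by
      rw [← Algebra.adjoin_eq_span]; exact hP
    clear hP
    induction hP' using Submodule.span_induction with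
    | mem P hPmem =>
      -- P is a product of coordinate functions
      obtain ⟨l, hl1, hl2⟩ := Submonoid.exists_list_of_mem_closure hPmem
      obtain ⟨L, rfl⟩ := list_subset_range_exists (coordCM ι) l hl1
      have hPx : ∀ x : L2R ι, P x = ((L : Multiset ι).map fun i => x i).prod := by
        intro x
        rw [← hl2, coordCM_list_prod]
        simp [Multiset.map_coe, Multiset.prod_coe]
      simp only [hPx]
      exact h (L : Multiset ι)
    | zero => simp
    | add P Q hPm hQm hP hQ =>
      have e1 : ∀ μ : Measure (L2R ι), μ.restrict E = μ → ∀ [IsFiniteMeasure μ],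
          (∫ x, (P + Q) x ∂μ) = (∫ x, P x ∂μ) + ∫ x, Q x ∂μ := by
        intro μ hμ _
        simp only [ContinuousMap.coe_add, Pi.add_apply]
        exact integral_add (hint P μ hμ) (hint Q μ hμ)
      rw [e1 ν hrν, e1 ν' hrν', hP, hQ]
    | smul c P hPm hP =>
      have e1 : ∀ μ : Measure (L2R ι), (∫ x, (c • P) x ∂μ) = c • ∫ x, P x ∂μ := by
        intro μ
        simp only [ContinuousMap.coe_smul, Pi.smul_apply]
        exact integral_smul c _
      rw [e1, e1, hP]
  -- bounded continuous real functions integrate equally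
  have hbc : ∀ f : L2R ι →ᵇ ℝ, (∫ x, f x ∂ν) = ∫ x, f x ∂ν' := by
    intro f
    -- Stone-Weierstrass on E
    haveI : CompactSpace E := isCompact_iff_compactSpace.mp hE
    set res : C(L2R ι, ℝ) →ₐ[ℝ] C(E, ℝ) :=
      ContinuousMap.compRightAlgHom ℝ ℝ ⟨Subtype.val, continuous_subtype_val⟩ with hres
    set A : Subalgebra ℝ C(E, ℝ) :=
      (Algebra.adjoin ℝ (Set.range (coordCM ι))).map res with hA
    have hsep : A.SeparatesPoints := by
      intro x y hxy
      have hne : (x : L2R ι) ≠ (y : L2R ι) := fun hc => hxy (Subtype.ext hc)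
      have : ∃ i, (x : L2R ι) i ≠ (y : L2R ι) i := by
        by_contra hcon
        push_neg at hcon
        exact hne (lp.ext (funext hcon))
      obtain ⟨i, hi⟩ := this
      exact ⟨res (coordCM ι i),
        ⟨res (coordCM ι i),
          Subalgebra.mem_map.mpr ⟨coordCM ι i, Algebra.subset_adjoin ⟨i, rfl⟩, rfl⟩, rfl⟩, hi⟩
    set C : ℝ := (ν Set.univ).toReal + (ν' Set.univ).toReal with hC
    have hC0 : 0 ≤ C := by positivity
    have key : ∀ ε : ℝ, 0 < ε → |(∫ x, f x ∂ν) - ∫ x, f x ∂ν'| ≤ ε * C := by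
      intro ε hε
      obtain ⟨⟨g, ⟨P, hPmem, rfl⟩⟩, hg⟩ :=
        ContinuousMap.exists_mem_subalgebra_near_continuous_of_separatesPoints A hsep
          (fun x : E => f x) (f.continuous.comp continuous_subtype_val) ε hε
      have hbound : ∀ (μ : Measure (L2R ι)) [IsFiniteMeasure μ], (∀ᵐ x ∂μ, x ∈ E) →
          μ.restrict E = μ →
          |(∫ x, f x ∂μ) - ∫ x, P x ∂μ| ≤ ε * (μ Set.univ).toReal := by
        intro μ _ hae hμr
        rw [← integral_sub (f.integrable μ) (hint P μ hμr)]
        have hb := norm_integral_le_of_norm_le_const (μ := μ) (C := ε)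
          (f := fun x => f x - P x) ?_
        · simpa [Measure.real] using hb
        · filter_upwards [hae] with x hx
          have hgx := hg ⟨x, hx⟩
          simp only [hres, ContinuousMap.compRightAlgHom_apply, ContinuousMap.comp_apply,
            ContinuousMap.coe_mk] at hgx
          rw [Real.norm_eq_abs] at hgx ⊢
          rw [abs_sub_comm]
          exact hgx.le
      have h1 := hbound ν haeν hrν
      have h2 := hbound ν' haeν' hrν'
      have hPP : (∫ x, P x ∂ν) = ∫ x, P x ∂ν' := hpoly P hPmem
      calc |(∫ x, f x ∂ν) - ∫ x, f x ∂ν'|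
          = |((∫ x, f x ∂ν) - ∫ x, P x ∂ν) - ((∫ x, f x ∂ν') - ∫ x, P x ∂ν')| := by
            rw [hPP]; ring_nf
        _ ≤ |(∫ x, f x ∂ν) - ∫ x, P x ∂ν| + |(∫ x, f x ∂ν') - ∫ x, P x ∂ν'| :=
            abs_sub _ _
        _ ≤ ε * (ν Set.univ).toReal + ε * (ν' Set.univ).toReal := add_le_add h1 h2
        _ = ε * C := by rw [hC]; ring
    have hle : |(∫ x, f x ∂ν) - ∫ x, f x ∂ν'| ≤ 0 := by
      refine le_of_forall_pos_le_add fun ε hε => ?_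
      have hεC : 0 < ε / (C + 1) := by positivity
      calc |(∫ x, f x ∂ν) - ∫ x, f x ∂ν'| ≤ (ε / (C + 1)) * C := key _ hεC
        _ ≤ (ε / (C + 1)) * (C + 1) := by
            exact mul_le_mul_of_nonneg_left (by linarith) hεC.le
        _ = ε := by field_simp
        _ = 0 + ε := by ring
    have heq0 : (∫ x, f x ∂ν) - ∫ x, f x ∂ν' = 0 :=
      abs_eq_zero.mp (le_antisymm hle (abs_nonneg _))
    linarith
  -- conclude via the NNReal bounded continuous function criterion
  apply ext_of_forall_lintegral_eq_of_IsFiniteMeasure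
  intro f
  -- view f as a real-valued bounded continuous function
  set g : L2R ι →ᵇ ℝ :=
    ⟨⟨fun x => (f x : ℝ), NNReal.continuous_coe.comp f.continuous⟩, by
      obtain ⟨Cb, hCb⟩ := f.bounded
      exact ⟨Cb, fun x y => by
        have := hCb x y
        rwa [NNReal.dist_eq] at this⟩⟩ with hg
  have hgeq : (∫ x, g x ∂ν) = ∫ x, g x ∂ν' := hbc g
  have h1 := BoundedContinuousFunction.toReal_lintegral_coe_eq_integral f ν
  have h2 := BoundedContinuousFunction.toReal_lintegral_coe_eq_integral f ν'
  have hg1 : (∫ x, g x ∂ν) = ∫ x, (f x : ℝ) ∂ν := rfl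
  have hg2 : (∫ x, g x ∂ν') = ∫ x, (f x : ℝ) ∂ν' := rfl
  have hfin1 : (∫⁻ x, (f x : ℝ≥0∞) ∂ν) ≠ ∞ :=
    (BoundedContinuousFunction.lintegral_lt_top_of_nnreal ν f).ne
  have hfin2 : (∫⁻ x, (f x : ℝ≥0∞) ∂ν') ≠ ∞ :=
    (BoundedContinuousFunction.lintegral_lt_top_of_nnreal ν' f).ne
  rw [← ENNReal.toReal_eq_toReal_iff' hfin1 hfin2, h1, h2, ← hg1, ← hg2]
  exact hgeq
end

section
/- Let H be a real inner product space, let l be a positive integer and g : Fin l → H. Then the set {(⟨g_1, f⟩, …, ⟨g_l, f⟩) : f ∈ H} ⊆ ℝ^l equals the set {(Σ_{i=1}^l ⟨g_1, g_i⟩ w_i, …, Σ_{i=1}^l ⟨g_l, g_i⟩ w_i) : w ∈ ℝ^l}, i.e. the range of the feature map f ↦ (⟨g_j, f⟩)_{j=1,…,l} over all of H equals the range of the Gram matrix G = (⟨g_j, g_i⟩)_{j,i} acting on ℝ^l. -/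
open scoped RealInnerProductSpace

/-- The range of the feature map `f ↦ (⟪g_j, f⟫)_{j}` over a real inner product space `H`
equals the range of the Gram matrix `G = (⟪g_j, g_i⟫)_{j,i}` acting on `ℝ^l`. -/
theorem feature_map_range_eq_gram_range (H : Type*) [NormedAddCommGroup H]
    [InnerProductSpace ℝ H] (l : ℕ) (hl : 0 < l) (g : Fin l → H) :
    {v : Fin l → ℝ | ∃ f : H, ∀ j, v j = ⟪g j, f⟫} =
      {v : Fin l → ℝ | ∃ w : Fin l → ℝ, ∀ j, v j = ∑ i, ⟪g j, g i⟫ * w i} := by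
  ext v
  simp only [Set.mem_setOf_eq]
  constructor
  · rintro ⟨f, hf⟩
    set K := Submodule.span ℝ (Set.range g) with hK
    haveI : FiniteDimensional ℝ K := FiniteDimensional.span_of_finite ℝ (Set.finite_range g)
    obtain ⟨w, hw⟩ := (Submodule.mem_span_range_iff_exists_fun ℝ).mp
      (Submodule.coe_mem (K.orthogonalProjectionOnto f))
    refine ⟨w, fun j => ?_⟩
    have hmem : f - (K.orthogonalProjectionOnto f : H) ∈ Kᗮ :=
      Submodule.sub_starProjection_mem_orthogonal f
    have hgj : g j ∈ K := Submodule.subset_span ⟨j, rfl⟩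
    have h0 : ⟪g j, f - (K.orthogonalProjectionOnto f : H)⟫ = 0 :=
      (Submodule.mem_orthogonal K _).mp hmem (g j) hgj
    have h1 : ⟪g j, f⟫ = ⟪g j, (K.orthogonalProjectionOnto f : H)⟫ := by
      have := inner_sub_right (𝕜 := ℝ) (g j) f (K.orthogonalProjectionOnto f : H)
      rw [h0] at this
      linarith
    rw [hf, h1, ← hw, inner_sum]
    refine Finset.sum_congr rfl fun i _ => ?_
    rw [real_inner_smul_right, mul_comm]
  · rintro ⟨w, hw⟩
    refine ⟨∑ i, w i • g i, fun j => ?_⟩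
    rw [hw, inner_sum]
    refine Finset.sum_congr rfl fun i _ => ?_
    rw [real_inner_smul_right, mul_comm]
end

section
/- Let H be a real inner product space, l a positive integer, g : Fin l → H, and p : ℝ^l → ℝ any function. Then the infimum over f ∈ H of p(⟨g_1, f⟩, …, ⟨g_l, f⟩) equals the infimum over w ∈ ℝ^l of p(Σ_i ⟨g_1, g_i⟩ w_i, …, Σ_i ⟨g_l, g_i⟩ w_i). In particular, the Sobolev polynomial optimization problem inf_{f ∈ H} p(⟨g_1, f⟩, …, ⟨g_l, f⟩) is equivalent to a finite-dimensional optimization problem over ℝ^l. -/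
open scoped RealInnerProductSpace

/-- The Sobolev polynomial optimization problem `inf_{f ∈ H} p(⟪g_1, f⟫, …, ⟪g_l, f⟫)`
over a real inner product space `H` equals the finite-dimensional problem
`inf_{w ∈ ℝ^l} p(Gw)` where `G` is the Gram matrix `G_{j,i} = ⟪g_j, g_i⟫`. -/
theorem representer_inf_eq (H : Type*) [NormedAddCommGroup H]
    [InnerProductSpace ℝ H] (l : ℕ) (hl : 0 < l) (g : Fin l → H)
    (p : (Fin l → ℝ) → ℝ) :
    ⨅ f : H, p (fun j => ⟪g j, f⟫) =
      ⨅ w : Fin l → ℝ, p (fun j => ∑ i, ⟪g j, g i⟫ * w i) := by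
  have key : Set.range (fun f : H => p (fun j => ⟪g j, f⟫)) =
      Set.range (fun w : Fin l → ℝ => p (fun j => ∑ i, ⟪g j, g i⟫ * w i)) := by
    apply Set.Subset.antisymm
    · rintro x ⟨f, rfl⟩
      haveI : FiniteDimensional ℝ (Submodule.span ℝ (Set.range g)) :=
        FiniteDimensional.span_of_finite ℝ (Set.finite_range g)
      obtain ⟨w, hw⟩ := (Submodule.mem_span_range_iff_exists_fun ℝ).1
        (Submodule.orthogonalProjectionOnto (Submodule.span ℝ (Set.range g)) f).2
      refine ⟨w, ?_⟩
      simp only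
      congr 1
      funext j
      have hj : g j ∈ Submodule.span ℝ (Set.range g) := Submodule.subset_span ⟨j, rfl⟩
      have horth : ⟪g j, f - (Submodule.orthogonalProjectionOnto (Submodule.span ℝ (Set.range g)) f : H)⟫ = 0 := by
        have := Submodule.sub_starProjection_mem_orthogonal (K := Submodule.span ℝ (Set.range g)) f
        rw [real_inner_comm]
        exact (Submodule.mem_orthogonal' _ _).1 this (g j) hj
      have : ⟪g j, f⟫ = ⟪g j, (Submodule.orthogonalProjectionOnto (Submodule.span ℝ (Set.range g)) f : H)⟫ := by
        have := inner_sub_right (𝕜 := ℝ) (g j) f (Submodule.orthogonalProjectionOnto (Submodule.span ℝ (Set.range g)) f : H)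
        linarith [horth, this]
      rw [this, ← hw, inner_sum]
      simp [real_inner_smul_right, mul_comm]
    · rintro x ⟨w, rfl⟩
      refine ⟨∑ i, w i • g i, ?_⟩
      simp only
      congr 1
      funext j
      rw [inner_sum]
      simp [real_inner_smul_right, mul_comm]
  rw [iInf, iInf, key]
end

section
/- Let H be a real inner product space, l a positive integer, g : Fin l → H, p : ℝ^l → ℝ any function, and G the Gram matrix G_{j,i} = ⟨g_j, g_i⟩. (i) If w* ∈ ℝ^l minimizes w ↦ p(Gw) over ℝ^l, then f* := Σ_{j=1}^l w*_j g_j minimizes f ↦ p(⟨g_1, f⟩, …, ⟨g_l, f⟩) over H. (ii) Conversely, if f* ∈ H minimizes f ↦ p(⟨g_1, f⟩, …, ⟨g_l, f⟩) over H, then there exists w* ∈ ℝ^l minimizing w ↦ p(Gw) with p(Gw*) = p(⟨g_1, f*⟩, …, ⟨g_l, f*⟩). In particular, the problem over H admits a minimizer if and only if the finite-dimensional problem over ℝ^l admits a minimizer, and the two problems have the same value. -/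
open scoped RealInnerProductSpace

lemma sum_inner_eq (H : Type*) [NormedAddCommGroup H]
    [InnerProductSpace ℝ H] (l : ℕ) (g : Fin l → H) (w : Fin l → ℝ) (j : Fin l) :
    (∑ i, ⟪g j, g i⟫ * w i) = ⟪g j, ∑ i, w i • g i⟫ := by
  rw [inner_sum]
  exact Finset.sum_congr rfl fun i _ => by rw [real_inner_smul_right]; ring

lemma exists_proj (H : Type*) [NormedAddCommGroup H]
    [InnerProductSpace ℝ H] (l : ℕ) (g : Fin l → H) (f : H) :
    ∃ w : Fin l → ℝ, ∀ j, (∑ i, ⟪g j, g i⟫ * w i) = ⟪g j, f⟫ := by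
  set K := Submodule.span ℝ (Set.range g) with hK
  haveI : FiniteDimensional ℝ K :=
    FiniteDimensional.span_of_finite ℝ (Set.finite_range g)
  set v : H := (K.orthogonalProjectionOnto f : H) with hv
  have hvK : v ∈ K := (K.orthogonalProjectionOnto f).2
  obtain ⟨w, hw⟩ := (Submodule.mem_span_range_iff_exists_fun ℝ).1 hvK
  refine ⟨w, fun j => ?_⟩
  have hj : g j ∈ K := Submodule.subset_span ⟨j, rfl⟩
  have h2 : ⟪g j, f - v⟫ = 0 :=
    Submodule.sub_starProjection_mem_orthogonal (K := K) f (g j) hj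
  have : ⟪g j, f⟫ = ⟪g j, v⟫ := by
    rw [inner_sub_right] at h2; linarith
  rw [this, ← hw, sum_inner_eq]

/-- Representer theorem for minimizers. With `G_{j,i} = ⟪g_j, g_i⟫` the Gram matrix:
(i) if `w*` minimizes `w ↦ p(Gw)` over `ℝ^l`, then `f* := ∑_j w*_j g_j` minimizes
`f ↦ p(⟪g_1, f⟫, …, ⟪g_l, f⟫)` over `H`;
(ii) conversely, if `f*` minimizes `f ↦ p(⟪g_1, f⟫, …, ⟪g_l, f⟫)` over `H`, then there is
`w*` minimizing `w ↦ p(Gw)` with `p(Gw*) = p(⟪g_1, f*⟫, …, ⟪g_l, f*⟫)`. -/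
theorem representer_minimizers (H : Type*) [NormedAddCommGroup H]
    [InnerProductSpace ℝ H] (l : ℕ) (hl : 0 < l) (g : Fin l → H)
    (p : (Fin l → ℝ) → ℝ) :
    (∀ wstar : Fin l → ℝ,
      (∀ w : Fin l → ℝ,
        p (fun j => ∑ i, ⟪g j, g i⟫ * wstar i) ≤ p (fun j => ∑ i, ⟪g j, g i⟫ * w i)) →
      ∀ f : H,
        p (fun j => ⟪g j, ∑ i, wstar i • g i⟫) ≤ p (fun j => ⟪g j, f⟫)) ∧
    (∀ fstar : H,
      (∀ f : H, p (fun j => ⟪g j, fstar⟫) ≤ p (fun j => ⟪g j, f⟫)) →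
      ∃ wstar : Fin l → ℝ,
        (∀ w : Fin l → ℝ,
          p (fun j => ∑ i, ⟪g j, g i⟫ * wstar i) ≤ p (fun j => ∑ i, ⟪g j, g i⟫ * w i)) ∧
        p (fun j => ∑ i, ⟪g j, g i⟫ * wstar i) = p (fun j => ⟪g j, fstar⟫)) := by
  constructor
  · intro wstar hmin f
    obtain ⟨w, hw⟩ := exists_proj H l g f
    have h1 : (fun j => ⟪g j, ∑ i, wstar i • g i⟫) =
        (fun j => ∑ i, ⟪g j, g i⟫ * wstar i) := by
      funext j; exact (sum_inner_eq H l g wstar j).symm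
    have h2 : (fun j => ⟪g j, f⟫) = (fun j => ∑ i, ⟪g j, g i⟫ * w i) := by
      funext j; exact (hw j).symm
    rw [h1, h2]; exact hmin w
  · intro fstar hmin
    obtain ⟨wstar, hws⟩ := exists_proj H l g fstar
    have heq : (fun j => ∑ i, ⟪g j, g i⟫ * wstar i) = (fun j => ⟪g j, fstar⟫) := by
      funext j; exact hws j
    refine ⟨wstar, fun w => ?_, by rw [heq]⟩
    have h2 : (fun j => ∑ i, ⟪g j, g i⟫ * w i) =
        (fun j => ⟪g j, ∑ i, w i • g i⟫) := by
      funext j; exact sum_inner_eq H l g w j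
    rw [heq, h2]; exact hmin _
end

section
/- The outer relaxation values converge to the global minimum: sup_{r ∈ ℕ, 2r ≥ deg p} p^out_r = min_{x ∈ K} p(x). -/
open MvPolynomial

/-- `σ` is a sum of squares of polynomials of degree at most `r`. -/
def IsSOS {N : ℕ} (r : ℕ) (σ : MvPolynomial (Fin N) ℝ) : Prop :=
  ∃ (k : ℕ) (q : Fin k → MvPolynomial (Fin N) ℝ),
    (∀ j, (q j).totalDegree ≤ r) ∧ σ = ∑ j, q j ^ 2

/-- The truncated quadratic module `Q_r` associated with the ellipsoid constraint
`1 − ∑ᵢ wᵢ xᵢ² ≥ 0`: polynomials `σ₀ + σ₁ · (1 − ∑ᵢ wᵢ xᵢ²)` with `σ₀` a sum of squares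
of degree ≤ 2r and `σ₁` a sum of squares of degree ≤ 2r − 2. -/
def Qmod {N : ℕ} (w : Fin N → ℝ) (r : ℕ) : Set (MvPolynomial (Fin N) ℝ) :=
  {q | ∃ σ₀ σ₁ : MvPolynomial (Fin N) ℝ, IsSOS r σ₀ ∧ IsSOS (r - 1) σ₁ ∧
    q = σ₀ + σ₁ * (1 - ∑ i, C (w i) * X i ^ 2)}

/-- The outer moment-SOS relaxation value
`p^out_r = inf {L(p) : L linear, L(1) = 1, L ≥ 0 on Q_r}`. -/
noncomputable def pOut {N : ℕ} (w : Fin N → ℝ) (p : MvPolynomial (Fin N) ℝ)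
    (r : ℕ) : ℝ :=
  sInf {v | ∃ L : MvPolynomial (Fin N) ℝ →ₗ[ℝ] ℝ,
    L 1 = 1 ∧ (∀ q ∈ Qmod w r, 0 ≤ L q) ∧ v = L p}

namespace OuterRel

variable {N : ℕ}

/-- sums of squares, no degree bound -/
def Sos (N : ℕ) : Set (MvPolynomial (Fin N) ℝ) :=
  {σ | ∃ (k : ℕ) (q : Fin k → MvPolynomial (Fin N) ℝ), σ = ∑ j, q j ^ 2}

lemma zero_mem_Sos : (0 : MvPolynomial (Fin N) ℝ) ∈ Sos N :=
  ⟨0, fun j => 0, by simp⟩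

lemma sq_mem_Sos (q : MvPolynomial (Fin N) ℝ) : q ^ 2 ∈ Sos N :=
  ⟨1, fun _ => q, by simp⟩

lemma one_mem_Sos : (1 : MvPolynomial (Fin N) ℝ) ∈ Sos N := by
  simpa using sq_mem_Sos (1 : MvPolynomial (Fin N) ℝ)

lemma add_mem_Sos {a b : MvPolynomial (Fin N) ℝ} (ha : a ∈ Sos N) (hb : b ∈ Sos N) :
    a + b ∈ Sos N := by
  obtain ⟨k, q, rfl⟩ := ha
  obtain ⟨l, s, rfl⟩ := hb
  refine ⟨k + l, Fin.append q s, ?_⟩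
  rw [Fin.sum_univ_add]
  simp [Fin.append]

lemma mul_mem_Sos {a b : MvPolynomial (Fin N) ℝ} (ha : a ∈ Sos N) (hb : b ∈ Sos N) :
    a * b ∈ Sos N := by
  obtain ⟨k, q, rfl⟩ := ha
  obtain ⟨l, s, rfl⟩ := hb
  refine ⟨k * l, fun j => q (finProdFinEquiv.symm j).1 * s (finProdFinEquiv.symm j).2, ?_⟩
  rw [Finset.sum_mul_sum]
  have h := Equiv.sum_comp (finProdFinEquiv.symm : Fin (k * l) ≃ Fin k × Fin l)
    (fun p => (q p.1 * s p.2) ^ 2)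
  rw [show (∑ i : Fin k, ∑ j : Fin l, q i ^ 2 * s j ^ 2)
      = ∑ p : Fin k × Fin l, (q p.1 * s p.2) ^ 2 by
    rw [Fintype.sum_prod_type]; simp [mul_pow], ← h]

lemma smul_mem_Sos {a : MvPolynomial (Fin N) ℝ} {c : ℝ} (hc : 0 ≤ c) (ha : a ∈ Sos N) :
    c • a ∈ Sos N := by
  obtain ⟨k, q, rfl⟩ := ha
  refine ⟨k, fun j => C (Real.sqrt c) * q j, ?_⟩
  rw [Finset.smul_sum]
  refine Finset.sum_congr rfl fun j _ => ?_
  rw [mul_pow, ← map_pow, Real.sq_sqrt hc, smul_eq_C_mul]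

lemma C_mem_Sos {c : ℝ} (hc : 0 ≤ c) : (C c : MvPolynomial (Fin N) ℝ) ∈ Sos N := by
  have := smul_mem_Sos hc (one_mem_Sos (N := N))
  simpa [smul_eq_C_mul] using this


lemma sos_elim {σ : MvPolynomial (Fin N) ℝ} (h : σ ∈ Sos N) :
    ∃ (k : ℕ) (q : Fin k → MvPolynomial (Fin N) ℝ), σ = ∑ j, q j ^ 2 := h

/-- the ellipsoid constraint polynomial -/
noncomputable def gp (w : Fin N → ℝ) : MvPolynomial (Fin N) ℝ :=
  1 - ∑ i, C (w i) * X i ^ 2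

/-- the quadratic module (= preordering) generated by `gp w` -/
def T (w : Fin N → ℝ) : Set (MvPolynomial (Fin N) ℝ) :=
  {a | ∃ σ₀ ∈ Sos N, ∃ σ₁ ∈ Sos N, a = σ₀ + σ₁ * gp w}

variable {w : Fin N → ℝ}

lemma sos_mem_T {a : MvPolynomial (Fin N) ℝ} (ha : a ∈ Sos N) : a ∈ T w :=
  ⟨a, ha, 0, zero_mem_Sos, by ring⟩

lemma gp_mem_T : gp w ∈ T w := ⟨0, zero_mem_Sos, 1, one_mem_Sos, by ring⟩

lemma zero_mem_T : (0 : MvPolynomial (Fin N) ℝ) ∈ T w := sos_mem_T zero_mem_Sos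
lemma one_mem_T : (1 : MvPolynomial (Fin N) ℝ) ∈ T w := sos_mem_T one_mem_Sos
lemma C_mem_T {c : ℝ} (hc : 0 ≤ c) : (C c : MvPolynomial (Fin N) ℝ) ∈ T w :=
  sos_mem_T (C_mem_Sos hc)
lemma sq_mem_T (q : MvPolynomial (Fin N) ℝ) : q ^ 2 ∈ T w := sos_mem_T (sq_mem_Sos q)

lemma add_mem_T {a b : MvPolynomial (Fin N) ℝ} (ha : a ∈ T w) (hb : b ∈ T w) :
    a + b ∈ T w := by
  obtain ⟨σ₀, h₀, σ₁, h₁, rfl⟩ := ha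
  obtain ⟨τ₀, g₀, τ₁, g₁, rfl⟩ := hb
  exact ⟨σ₀ + τ₀, add_mem_Sos h₀ g₀, σ₁ + τ₁, add_mem_Sos h₁ g₁, by ring⟩

lemma mul_mem_T {a b : MvPolynomial (Fin N) ℝ} (ha : a ∈ T w) (hb : b ∈ T w) :
    a * b ∈ T w := by
  obtain ⟨σ₀, h₀, σ₁, h₁, rfl⟩ := ha
  obtain ⟨τ₀, g₀, τ₁, g₁, rfl⟩ := hb
  exact ⟨σ₀ * τ₀ + (σ₁ * τ₁) * gp w ^ 2,
    add_mem_Sos (mul_mem_Sos h₀ g₀) (mul_mem_Sos (mul_mem_Sos h₁ g₁) (sq_mem_Sos _)),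
    σ₀ * τ₁ + σ₁ * τ₀, add_mem_Sos (mul_mem_Sos h₀ g₁) (mul_mem_Sos h₁ g₀), by ring⟩

lemma smul_mem_T {a : MvPolynomial (Fin N) ℝ} {c : ℝ} (hc : 0 ≤ c) (ha : a ∈ T w) :
    c • a ∈ T w := by
  obtain ⟨σ₀, h₀, σ₁, h₁, rfl⟩ := ha
  exact ⟨c • σ₀, smul_mem_Sos hc h₀, c • σ₁, smul_mem_Sos hc h₁, by
    rw [smul_add, smul_mul_assoc]⟩

lemma pow_mem_T {a : MvPolynomial (Fin N) ℝ} (ha : a ∈ T w) (m : ℕ) : a ^ m ∈ T w := by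
  induction m with
  | zero => simpa using one_mem_T
  | succ n ih => rw [pow_succ]; exact mul_mem_T ih ha

lemma sum_mem_Sos {ι : Type*} (s : Finset ι) (f : ι → MvPolynomial (Fin N) ℝ)
    (h : ∀ i ∈ s, f i ∈ Sos N) : ∑ i ∈ s, f i ∈ Sos N := by
  classical
  induction s using Finset.induction_on with
  | empty => simpa using zero_mem_Sos
  | @insert x s hx ih =>
      rw [Finset.sum_insert hx]
      exact add_mem_Sos (h _ (Finset.mem_insert_self _ _))
        (ih fun i hi => h i (Finset.mem_insert_of_mem hi))

section arch
variable (hw : ∀ i, 0 < w i)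
include hw

lemma sq_bound (i : Fin N) : C (1 / w i) - X i ^ 2 ∈ T w := by
  have hrel : C (1 / w i) * (∑ j, C (w j) * X j ^ 2) =
      ∑ j, C (w j / w i) * X j ^ 2 := by
    rw [Finset.mul_sum]
    refine Finset.sum_congr rfl fun j _ => ?_
    rw [← mul_assoc, ← map_mul]
    congr 2
    field_simp
  have key : C (1 / w i) - X i ^ 2 = (1 / w i) • gp w +
      ∑ j, C (w j / w i - if j = i then 1 else 0) * X j ^ 2 := by
    have h1 : ∀ j : Fin N, C (w j / w i - if j = i then 1 else 0) * X j ^ 2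
        = C (w j / w i) * X j ^ 2 - (if j = i then X j ^ 2 else 0) := by
      intro j
      split <;> simp [map_sub, sub_mul]
    rw [Finset.sum_congr rfl fun j _ => h1 j, Finset.sum_sub_distrib,
      Finset.sum_ite_eq' Finset.univ i (fun j => X j ^ 2)]
    simp only [Finset.mem_univ, if_true]
    rw [smul_eq_C_mul, gp, mul_sub, hrel, mul_one]
    ring
  rw [key]
  refine add_mem_T (smul_mem_T (by have := hw i; positivity) gp_mem_T) (sos_mem_T ?_)
  refine sum_mem_Sos _ _ fun j _ => ?_
  have hd : 0 ≤ w j / w i - if j = i then 1 else 0 := by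
    split
    · rename_i h; subst h; rw [div_self (ne_of_gt (hw j))]; norm_num
    · have := le_of_lt (div_pos (hw j) (hw i)); linarith
  have : C (w j / w i - if j = i then 1 else 0) * X j ^ 2
      = (C (Real.sqrt (w j / w i - if j = i then 1 else 0)) * X j) ^ 2 := by
    rw [mul_pow, ← map_pow, Real.sq_sqrt hd]
  rw [this]
  exact sq_mem_Sos _

/-- boundedness of an element w.r.t. the preordering -/
def Bdd (w : Fin N → ℝ) (a : MvPolynomial (Fin N) ℝ) : Prop :=
  ∃ c : ℝ, 1 ≤ c ∧ C c - a ∈ T w ∧ C c + a ∈ T w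

omit hw in
lemma bdd_C (r : ℝ) : Bdd w (C r) := by
  refine ⟨|r| + 1, by linarith [abs_nonneg r], ?_, ?_⟩
  · rw [← map_sub]; exact C_mem_T (by cases abs_cases r <;> linarith)
  · rw [← map_add]; exact C_mem_T (by cases abs_cases r <;> linarith)

omit hw in
lemma bdd_neg {a : MvPolynomial (Fin N) ℝ} (ha : Bdd w a) : Bdd w (-a) := by
  obtain ⟨c, hc, h1, h2⟩ := ha
  exact ⟨c, hc, by simpa [sub_neg_eq_add] using h2, by simpa [sub_eq_add_neg] using h1⟩

omit hw in
lemma bdd_add {a b : MvPolynomial (Fin N) ℝ} (ha : Bdd w a) (hb : Bdd w b) :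
    Bdd w (a + b) := by
  obtain ⟨c, hc, h1, h2⟩ := ha
  obtain ⟨d, hd, g1, g2⟩ := hb
  refine ⟨c + d, by linarith, ?_, ?_⟩
  · have := add_mem_T h1 g1
    rw [map_add]; convert this using 1; ring
  · have := add_mem_T h2 g2
    rw [map_add]; convert this using 1; ring

lemma bdd_X (i : Fin N) : Bdd w (X i) := by
  set c₁ : ℝ := (1 / w i + 1) / 2 with hc₁
  have hA : (C c₁ : MvPolynomial (Fin N) ℝ) = C (2⁻¹ : ℝ) * C (1 / w i) + C (2⁻¹ : ℝ) := by
    rw [← map_mul, ← map_add]; congr 1; rw [hc₁]; ring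
  have hB : (2 : MvPolynomial (Fin N) ℝ) * C (2⁻¹ : ℝ) = 1 := by
    rw [show ((2 : MvPolynomial (Fin N) ℝ)) = C (2 : ℝ) from (map_ofNat C 2).symm, ← map_mul]
    norm_num
  have hup : C c₁ - X i ∈ T w := by
    have key : C c₁ - X i
        = (2⁻¹ : ℝ) • (C (1 / w i) - X i ^ 2) + (2⁻¹ : ℝ) • (X i - 1) ^ 2 := by
      rw [smul_eq_C_mul, smul_eq_C_mul, hA]
      linear_combination (X i) * hB
    rw [key]
    exact add_mem_T (smul_mem_T (by norm_num) (sq_bound hw i))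
      (smul_mem_T (by norm_num) (sq_mem_T _))
  have hdown : C c₁ + X i ∈ T w := by
    have key : C c₁ + X i
        = (2⁻¹ : ℝ) • (C (1 / w i) - X i ^ 2) + (2⁻¹ : ℝ) • (X i + 1) ^ 2 := by
      rw [smul_eq_C_mul, smul_eq_C_mul, hA]
      linear_combination (-(X i)) * hB
    rw [key]
    exact add_mem_T (smul_mem_T (by norm_num) (sq_bound hw i))
      (smul_mem_T (by norm_num) (sq_mem_T _))
  refine ⟨max c₁ 1, le_max_right _ _, ?_, ?_⟩
  · have : (C (max c₁ 1) : MvPolynomial (Fin N) ℝ) - X i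
        = C (max c₁ 1 - c₁) + (C c₁ - X i) := by rw [map_sub]; ring
    rw [this]
    exact add_mem_T (C_mem_T (by simp [le_max_left])) hup
  · have : (C (max c₁ 1) : MvPolynomial (Fin N) ℝ) + X i
        = C (max c₁ 1 - c₁) + (C c₁ + X i) := by rw [map_sub]; ring
    rw [this]
    exact add_mem_T (C_mem_T (by simp [le_max_left])) hdown

omit hw in
lemma bdd_sq {a : MvPolynomial (Fin N) ℝ} (ha : Bdd w a) : Bdd w (a ^ 2) := by
  obtain ⟨c, hc, h1, h2⟩ := ha
  have hcpos : (0:ℝ) < c := by linarith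
  refine ⟨c ^ 2, by nlinarith, ?_, ?_⟩
  · have hB' : (C ((2*c)⁻¹ : ℝ) : MvPolynomial (Fin N) ℝ) * (2 * C c) = 1 := by
      rw [show ((2 : MvPolynomial (Fin N) ℝ) * C c) = C (2*c : ℝ) by
        rw [map_mul, map_ofNat], ← map_mul, inv_mul_cancel₀ (by positivity), map_one]
    have key : C (c ^ 2) - a ^ 2
        = ((2*c)⁻¹ : ℝ) • ((C c + a) ^ 2 * (C c - a) + (C c - a) ^ 2 * (C c + a)) := by
      rw [smul_eq_C_mul, map_pow]
      linear_combination (a ^ 2 - C c ^ 2) * hB'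
    rw [key]
    exact smul_mem_T (by positivity)
      (add_mem_T (mul_mem_T (sq_mem_T _) h1) (mul_mem_T (sq_mem_T _) h2))
  · rw [map_pow]
    exact add_mem_T (sq_mem_T _) (sq_mem_T a)

omit hw in
lemma bdd_smul_nonneg {a : MvPolynomial (Fin N) ℝ} {t : ℝ} (ht : 0 ≤ t) (ha : Bdd w a) :
    Bdd w (t • a) := by
  obtain ⟨c, hc, h1, h2⟩ := ha
  have hnn : (0:ℝ) ≤ t * c := by positivity
  refine ⟨t * c + 1, by linarith, ?_, ?_⟩
  · have key : C (t * c + 1) - t • a = C (1:ℝ) + t • (C c - a) := by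
      rw [smul_sub, smul_eq_C_mul a, smul_eq_C_mul (C c), ← map_mul, map_add, map_one]
      ring
    rw [key]
    exact add_mem_T (C_mem_T (by norm_num)) (smul_mem_T ht h1)
  · have key : C (t * c + 1) + t • a = C (1:ℝ) + t • (C c + a) := by
      rw [smul_add, smul_eq_C_mul a, smul_eq_C_mul (C c), ← map_mul, map_add, map_one]
      ring
    rw [key]
    exact add_mem_T (C_mem_T (by norm_num)) (smul_mem_T ht h2)

omit hw in
lemma bdd_smul {a : MvPolynomial (Fin N) ℝ} (t : ℝ) (ha : Bdd w a) : Bdd w (t • a) := by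
  rcases le_or_gt 0 t with ht | ht
  · exact bdd_smul_nonneg ht ha
  · have : t • a = (-t) • (-a) := by rw [smul_neg, neg_smul, neg_neg]
    rw [this]
    exact bdd_smul_nonneg (by linarith) (bdd_neg ha)

omit hw in
lemma bdd_sub {a b : MvPolynomial (Fin N) ℝ} (ha : Bdd w a) (hb : Bdd w b) :
    Bdd w (a - b) := by
  rw [sub_eq_add_neg]; exact bdd_add ha (bdd_neg hb)

omit hw in
lemma bdd_mul {a b : MvPolynomial (Fin N) ℝ} (ha : Bdd w a) (hb : Bdd w b) :
    Bdd w (a * b) := by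
  have hB : (C (2⁻¹ : ℝ) : MvPolynomial (Fin N) ℝ) * 2 = 1 := by
    rw [show ((2 : MvPolynomial (Fin N) ℝ)) = C (2 : ℝ) from (map_ofNat C 2).symm, ← map_mul]
    norm_num
  have key : a * b = (2⁻¹ : ℝ) • ((a + b) ^ 2 - a ^ 2 - b ^ 2) := by
    rw [smul_eq_C_mul]
    linear_combination (-(a*b)) * hB
  rw [key]
  exact bdd_smul _ (bdd_sub (bdd_sub (bdd_sq (bdd_add ha hb)) (bdd_sq ha)) (bdd_sq hb))

lemma bdd_all (a : MvPolynomial (Fin N) ℝ) : Bdd w a := by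
  induction a using MvPolynomial.induction_on with
  | C r => exact bdd_C r
  | add p q hp hq => exact bdd_add hp hq
  | mul_X p i hp => exact bdd_mul hp (bdd_X hw i)

end arch

lemma T_elim {w : Fin N → ℝ} {a : MvPolynomial (Fin N) ℝ} (h : a ∈ T w) :
    ∃ σ₀ ∈ Sos N, ∃ σ₁ ∈ Sos N, a = σ₀ + σ₁ * gp w := h

/-- quadratic module -/
def IsQM (S : Set (MvPolynomial (Fin N) ℝ)) : Prop :=
  (1 : MvPolynomial (Fin N) ℝ) ∈ S ∧ (∀ a ∈ S, ∀ b ∈ S, a + b ∈ S) ∧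
    (∀ q : MvPolynomial (Fin N) ℝ, ∀ a ∈ S, q ^ 2 * a ∈ S)

namespace IsQM

variable {S : Set (MvPolynomial (Fin N) ℝ)} (hS : IsQM S)
include hS

lemma one_mem : (1 : MvPolynomial (Fin N) ℝ) ∈ S := hS.1
lemma add_mem {a b : MvPolynomial (Fin N) ℝ} (ha : a ∈ S) (hb : b ∈ S) : a + b ∈ S :=
  hS.2.1 a ha b hb
lemma sq_mul_mem (q : MvPolynomial (Fin N) ℝ) {a : MvPolynomial (Fin N) ℝ} (ha : a ∈ S) :
    q ^ 2 * a ∈ S := hS.2.2 q a ha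
lemma zero_mem : (0 : MvPolynomial (Fin N) ℝ) ∈ S := by
  have := hS.sq_mul_mem 0 hS.one_mem
  simpa using this
lemma sq_mem (q : MvPolynomial (Fin N) ℝ) : q ^ 2 ∈ S := by
  have := hS.sq_mul_mem q hS.one_mem
  simpa using this
lemma smul_mem {c : ℝ} (hc : 0 ≤ c) {a : MvPolynomial (Fin N) ℝ} (ha : a ∈ S) : c • a ∈ S := by
  have h := hS.sq_mul_mem (C (Real.sqrt c)) ha
  rwa [← map_pow, Real.sq_sqrt hc, ← smul_eq_C_mul] at h
lemma C_mem {c : ℝ} (hc : 0 ≤ c) : (C c : MvPolynomial (Fin N) ℝ) ∈ S := by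
  have := hS.smul_mem hc hS.one_mem
  simpa [smul_eq_C_mul] using this
lemma sum_mem {ι : Type*} (s : Finset ι) (f : ι → MvPolynomial (Fin N) ℝ)
    (h : ∀ i ∈ s, f i ∈ S) : ∑ i ∈ s, f i ∈ S := by
  classical
  induction s using Finset.induction_on with
  | empty => simpa using hS.zero_mem
  | @insert x s hx ih =>
      rw [Finset.sum_insert hx]
      exact hS.add_mem (h _ (Finset.mem_insert_self _ _))
        (ih fun i hi => h i (Finset.mem_insert_of_mem hi))
lemma sos_mul_mem {σ a : MvPolynomial (Fin N) ℝ} (hσ : σ ∈ Sos N) (ha : a ∈ S) :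
    σ * a ∈ S := by
  obtain ⟨k, q, rfl⟩ := sos_elim hσ
  rw [Finset.sum_mul]
  exact hS.sum_mem _ _ fun j _ => hS.sq_mul_mem (q j) ha
lemma sos_mem {σ : MvPolynomial (Fin N) ℝ} (hσ : σ ∈ Sos N) : σ ∈ S := by
  have := hS.sos_mul_mem hσ hS.one_mem
  simpa using this

/-- a negative constant in a module makes it improper -/
lemma nonneg_of_C_mem (hproper : (-1 : MvPolynomial (Fin N) ℝ) ∉ S) {t : ℝ}
    (h : (C t : MvPolynomial (Fin N) ℝ) ∈ S) : 0 ≤ t := by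
  by_contra hneg
  push_neg at hneg
  have h2 := hS.smul_mem (c := -t⁻¹) (by
    have : 0 < -t⁻¹ := by
      rw [neg_pos]
      exact inv_neg''.mpr hneg
    linarith) h
  rw [smul_eq_C_mul, ← map_mul] at h2
  have : -t⁻¹ * t = -1 := by
    rw [neg_mul, inv_mul_cancel₀ (ne_of_lt hneg)]
  rw [this, map_neg, map_one] at h2
  exact hproper h2

/-- if x and -x belong to S, then a*x ∈ S for every a -/
lemma mul_supp_mem {x : MvPolynomial (Fin N) ℝ} (hx : x ∈ S) (hx' : -x ∈ S)
    (a : MvPolynomial (Fin N) ℝ) : a * x ∈ S := by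
  have h1 : (a + 1) ^ 2 * x ∈ S := hS.sq_mul_mem _ hx
  have h2 : a ^ 2 * (-x) ∈ S := hS.sq_mul_mem _ hx'
  have h3 := hS.add_mem (hS.add_mem h1 h2) hx'
  have key : a * x = (2⁻¹ : ℝ) • ((a + 1) ^ 2 * x + a ^ 2 * (-x) + -x) := by
    rw [smul_eq_C_mul]
    have hB : (C (2⁻¹ : ℝ) : MvPolynomial (Fin N) ℝ) * 2 = 1 := by
      rw [show ((2 : MvPolynomial (Fin N) ℝ)) = C (2 : ℝ) from (map_ofNat C 2).symm, ← map_mul]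
      norm_num
    linear_combination (-(a * x)) * hB
  rw [key]
  exact hS.smul_mem (by norm_num) h3

end IsQM

/-- Zorn: extension to a maximal proper quadratic module -/
lemma exists_maximal_qm (S₀ : Set (MvPolynomial (Fin N) ℝ)) (h₀ : IsQM S₀)
    (hp : (-1 : MvPolynomial (Fin N) ℝ) ∉ S₀) :
    ∃ S, S₀ ⊆ S ∧ IsQM S ∧ (-1 : MvPolynomial (Fin N) ℝ) ∉ S ∧
      ∀ S', IsQM S' → (-1 : MvPolynomial (Fin N) ℝ) ∉ S' → S ⊆ S' → S' = S := by
  obtain ⟨M, hM, hmax⟩ := zorn_subset_nonempty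
    {S | IsQM S ∧ (-1 : MvPolynomial (Fin N) ℝ) ∉ S}
    (fun c hc hchain hne => by
      refine ⟨⋃₀ c, ⟨⟨?_, ?_, ?_⟩, ?_⟩, fun s hs => Set.subset_sUnion_of_mem hs⟩
      · obtain ⟨s, hs⟩ := hne
        exact Set.mem_sUnion.2 ⟨s, hs, (hc hs).1.one_mem⟩
      · rintro a ⟨s, hs, has⟩ b ⟨t, ht, hbt⟩
        rcases hchain.total hs ht with h | h
        · exact Set.mem_sUnion.2 ⟨t, ht, (hc ht).1.add_mem (h has) hbt⟩
        · exact Set.mem_sUnion.2 ⟨s, hs, (hc hs).1.add_mem has (h hbt)⟩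
      · rintro q a ⟨s, hs, has⟩
        exact Set.mem_sUnion.2 ⟨s, hs, (hc hs).1.sq_mul_mem q has⟩
      · rintro ⟨s, hs, hmem⟩
        exact (hc hs).2 hmem)
    S₀ ⟨h₀, hp⟩
  exact ⟨M, hM, hmax.1.1, hmax.1.2, fun S' h1 h2 h3 =>
    le_antisymm (hmax.2 ⟨h1, h2⟩ h3) h3⟩

/-- maximal proper quadratic modules are total -/
lemma total_of_maximal {S : Set (MvPolynomial (Fin N) ℝ)} (hS : IsQM S)
    (hproper : (-1 : MvPolynomial (Fin N) ℝ) ∉ S)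
    (hmax : ∀ S', IsQM S' → (-1 : MvPolynomial (Fin N) ℝ) ∉ S' → S ⊆ S' → S' = S) :
    ∀ a, a ∈ S ∨ -a ∈ S := by
  intro a
  by_contra hcon
  push_neg at hcon
  obtain ⟨ha, hna⟩ := hcon
  -- the extension S + b·Sos
  have hext : ∀ b : MvPolynomial (Fin N) ℝ, b ∉ S →
      ∃ s ∈ S, ∃ σ ∈ Sos N, (-1 : MvPolynomial (Fin N) ℝ) = s + b * σ := by
    intro b hb
    set S' := {x | ∃ s ∈ S, ∃ σ ∈ Sos N, x = s + b * σ} with hS'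
    have hqm : IsQM S' := by
      refine ⟨⟨1, hS.one_mem, 0, zero_mem_Sos, by ring⟩, ?_, ?_⟩
      · rintro x ⟨s, hs, σ, hσ, rfl⟩ y ⟨t, ht, τ, hτ, rfl⟩
        exact ⟨s + t, hS.add_mem hs ht, σ + τ, add_mem_Sos hσ hτ, by ring⟩
      · rintro q x ⟨s, hs, σ, hσ, rfl⟩
        exact ⟨q ^ 2 * s, hS.sq_mul_mem q hs, q ^ 2 * σ,
          mul_mem_Sos (sq_mem_Sos q) hσ, by ring⟩
    have hsub : S ⊆ S' := fun s hs => ⟨s, hs, 0, zero_mem_Sos, by ring⟩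
    have hbmem : b ∈ S' := ⟨0, hS.zero_mem, 1, one_mem_Sos, by ring⟩
    by_cases himp : (-1 : MvPolynomial (Fin N) ℝ) ∈ S'
    · obtain ⟨s, hs, σ, hσ, he⟩ := himp
      exact ⟨s, hs, σ, hσ, he⟩
    · have := hmax S' hqm himp hsub
      rw [this] at hbmem
      exact absurd hbmem hb
  obtain ⟨q₁, hq₁, σ₁, hσ₁, e₁⟩ := hext a ha
  obtain ⟨q₂, hq₂, σ₂, hσ₂, e₂⟩ := hext (-a) hna
  -- σ₁ + σ₂ ∈ S ∩ -S
  have key : σ₁ + σ₂ + (σ₂ * q₁ + σ₁ * q₂) = 0 := by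
    linear_combination (-σ₂) * e₁ + (-σ₁) * e₂
  have hmemneg : -(σ₁ + σ₂) ∈ S := by
    have : -(σ₁ + σ₂) = σ₂ * q₁ + σ₁ * q₂ := by linear_combination -key
    rw [this]
    exact hS.add_mem (hS.sos_mul_mem hσ₂ hq₁) (hS.sos_mul_mem hσ₁ hq₂)
  have hσ₁S : σ₁ ∈ S := hS.sos_mem hσ₁
  have hσ₂S : σ₂ ∈ S := hS.sos_mem hσ₂
  have hnegσ₁ : -σ₁ ∈ S := by
    have : -σ₁ = -(σ₁ + σ₂) + σ₂ := by ring
    rw [this]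
    exact hS.add_mem hmemneg hσ₂S
  -- a * σ₁ ∈ S, hence -1 ∈ S
  have haσ₁ : a * σ₁ ∈ S := hS.mul_supp_mem hσ₁S hnegσ₁ a
  have : (-1 : MvPolynomial (Fin N) ℝ) ∈ S := by
    rw [e₁]
    exact hS.add_mem hq₁ haσ₁
  exact hproper this


section state

/-- the canonical state of an archimedean total proper quadratic module -/
noncomputable def alph (S : Set (MvPolynomial (Fin N) ℝ)) (a : MvPolynomial (Fin N) ℝ) : ℝ :=
  sInf {t : ℝ | C t - a ∈ S}

variable {S : Set (MvPolynomial (Fin N) ℝ)} (hS : IsQM S)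
  (hproper : (-1 : MvPolynomial (Fin N) ℝ) ∉ S)
  (htotal : ∀ a, a ∈ S ∨ -a ∈ S)
  (harch : ∀ a : MvPolynomial (Fin N) ℝ, ∃ c : ℝ, C c - a ∈ S)

include hS hproper harch

lemma U_nonempty (a : MvPolynomial (Fin N) ℝ) : {t : ℝ | C t - a ∈ S}.Nonempty := harch a

lemma U_bddBelow (a : MvPolynomial (Fin N) ℝ) : BddBelow {t : ℝ | C t - a ∈ S} := by
  obtain ⟨c, hc⟩ := harch (-a)
  rw [sub_neg_eq_add] at hc
  refine ⟨-c, fun t ht => ?_⟩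
  have hsum := hS.add_mem ht hc
  have : (C t - a) + (C c + a) = C (t + c) := by rw [map_add]; ring
  rw [this] at hsum
  have := hS.nonneg_of_C_mem hproper hsum
  linarith

lemma U_upward {a : MvPolynomial (Fin N) ℝ} {t t' : ℝ} (h : C t - a ∈ S) (htt' : t ≤ t') :
    C t' - a ∈ S := by
  have hsum := hS.add_mem (hS.C_mem (c := t' - t) (by linarith)) h
  have : C (t' - t) + (C t - a) = C t' - a := by rw [map_sub]; ring
  rwa [this] at hsum

lemma alph_le {a : MvPolynomial (Fin N) ℝ} {t : ℝ} (h : C t - a ∈ S) : alph S a ≤ t :=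
  csInf_le (U_bddBelow hS hproper harch a) h

lemma mem_of_lt {a : MvPolynomial (Fin N) ℝ} {t : ℝ} (h : alph S a < t) : C t - a ∈ S := by
  obtain ⟨s, hs, hst⟩ := exists_lt_of_csInf_lt (U_nonempty hS hproper harch a) h
  exact U_upward hS hproper harch hs (le_of_lt hst)

lemma le_alph {a : MvPolynomial (Fin N) ℝ} {t : ℝ} (h : C t - a ∉ S) : t ≤ alph S a := by
  refine le_csInf (U_nonempty hS hproper harch a) fun s hs => ?_
  by_contra hc
  push_neg at hc
  exact h (U_upward hS hproper harch hs (le_of_lt hc))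

include htotal in
lemma neg_mem_of_lt {a : MvPolynomial (Fin N) ℝ} {t : ℝ} (h : t < alph S a) : a - C t ∈ S := by
  have hnot : C t - a ∉ S := fun hmem => absurd (alph_le hS hproper harch hmem) (not_le.2 h)
  rcases htotal (C t - a) with hmem | hmem
  · exact absurd hmem hnot
  · rwa [neg_sub] at hmem

include htotal in
lemma alph_add (a b : MvPolynomial (Fin N) ℝ) : alph S (a + b) = alph S a + alph S b := by
  have hle : alph S (a + b) ≤ alph S a + alph S b := by
    refine le_of_forall_pos_le_add fun ε hε => ?_
    have h1 := mem_of_lt hS hproper harch (a := a) (t := alph S a + ε / 2) (by linarith)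
    have h2 := mem_of_lt hS hproper harch (a := b) (t := alph S b + ε / 2) (by linarith)
    have hsum := hS.add_mem h1 h2
    have heq : (C (alph S a + ε / 2) - a) + (C (alph S b + ε / 2) - b)
        = C ((alph S a + ε / 2) + (alph S b + ε / 2)) - (a + b) := by
      rw [map_add (C : ℝ →+* MvPolynomial (Fin N) ℝ) (alph S a + ε / 2)]; ring
    rw [heq] at hsum
    have := alph_le hS hproper harch hsum
    linarith
  have hge : alph S a + alph S b ≤ alph S (a + b) := by
    by_contra hc
    push_neg at hc
    set ε := (alph S a + alph S b - alph S (a + b)) / 3 with hε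
    have hεpos : 0 < ε := by rw [hε]; linarith
    have h0 := mem_of_lt hS hproper harch (a := a + b) (t := alph S (a + b) + ε / 2)
      (by linarith)
    have h1 := neg_mem_of_lt hS hproper htotal harch (a := a) (t := alph S a - ε)
      (by linarith)
    have h2 := neg_mem_of_lt hS hproper htotal harch (a := b) (t := alph S b - ε)
      (by linarith)
    have hsum := hS.add_mem (hS.add_mem h0 h1) h2
    have heq : ((C (alph S (a + b) + ε / 2) - (a + b)) + (a - C (alph S a - ε)))
          + (b - C (alph S b - ε))
        = C ((alph S (a + b) + ε / 2) - (alph S a - ε) - (alph S b - ε)) := by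
      rw [map_sub (C : ℝ →+* MvPolynomial (Fin N) ℝ)
          ((alph S (a + b) + ε / 2) - (alph S a - ε)),
        map_sub (C : ℝ →+* MvPolynomial (Fin N) ℝ) (alph S (a + b) + ε / 2)]
      ring
    rw [heq] at hsum
    have := hS.nonneg_of_C_mem hproper hsum
    linarith
  linarith

lemma alph_C (t : ℝ) : alph S (C t) = t := by
  refine le_antisymm (alph_le hS hproper harch (by rw [sub_self]; exact hS.zero_mem)) ?_
  refine le_csInf (U_nonempty hS hproper harch _) fun s hs => ?_
  have hs2 : (C (s - t) : MvPolynomial (Fin N) ℝ) ∈ S := by rw [map_sub]; exact hs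
  have := hS.nonneg_of_C_mem hproper hs2
  linarith

lemma alph_zero : alph S (0 : MvPolynomial (Fin N) ℝ) = 0 := by
  have := alph_C hS hproper harch (0 : ℝ)
  rwa [map_zero] at this

lemma alph_one : alph S (1 : MvPolynomial (Fin N) ℝ) = 1 := by
  have := alph_C hS hproper harch (1 : ℝ)
  rwa [map_one] at this

include htotal in
lemma alph_neg (a : MvPolynomial (Fin N) ℝ) : alph S (-a) = -alph S a := by
  have := alph_add hS hproper htotal harch a (-a)
  rw [add_neg_cancel, alph_zero hS hproper harch] at this
  linarith

lemma alph_smul_le {a : MvPolynomial (Fin N) ℝ} {t : ℝ} (ht : 0 < t) :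
    alph S (t • a) ≤ t * alph S a := by
  refine le_of_forall_pos_le_add fun ε hε => ?_
  have h1 := mem_of_lt hS hproper harch (a := a) (t := alph S a + ε / t)
    (by have := div_pos hε ht; linarith)
  have h2 := hS.smul_mem (le_of_lt ht) h1
  have heq : t • (C (alph S a + ε / t) - a) = C (t * (alph S a + ε / t)) - t • a := by
    rw [smul_sub, smul_eq_C_mul (C (alph S a + ε / t)), ← map_mul]
  rw [heq] at h2
  have := alph_le hS hproper harch h2
  have harith : t * (alph S a + ε / t) = t * alph S a + ε := by
    field_simp
  linarith

lemma alph_smul_pos {a : MvPolynomial (Fin N) ℝ} {t : ℝ} (ht : 0 < t) :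
    alph S (t • a) = t * alph S a := by
  refine le_antisymm (alph_smul_le hS hproper harch ht) ?_
  have h := alph_smul_le hS hproper harch (a := t • a) (t := t⁻¹) (by positivity)
  rw [inv_smul_smul₀ (ne_of_gt ht)] at h
  calc t * alph S a ≤ t * (t⁻¹ * alph S (t • a)) := by
        apply mul_le_mul_of_nonneg_left h (le_of_lt ht)
    _ = alph S (t • a) := by field_simp

include htotal in
lemma alph_smul (t : ℝ) (a : MvPolynomial (Fin N) ℝ) : alph S (t • a) = t * alph S a := by
  rcases lt_trichotomy t 0 with ht | rfl | ht
  · have : t • a = -((-t) • a) := by rw [neg_smul, neg_neg]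
    rw [this, alph_neg hS hproper htotal harch,
      alph_smul_pos hS hproper harch (by linarith : (0:ℝ) < -t)]
    ring
  · rw [zero_smul, alph_zero hS hproper harch]; ring
  · exact alph_smul_pos hS hproper harch ht

include htotal in
lemma alph_nonneg_of_mem {a : MvPolynomial (Fin N) ℝ} (ha : a ∈ S) : 0 ≤ alph S a := by
  by_contra hc
  push_neg at hc
  have h1 := mem_of_lt hS hproper harch (a := a) (t := alph S a / 2) (by linarith)
  have hsum := hS.add_mem h1 ha
  rw [sub_add_cancel] at hsum
  have := hS.nonneg_of_C_mem hproper hsum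
  linarith

include htotal in
lemma alph_sq (a : MvPolynomial (Fin N) ℝ) : alph S (a ^ 2) = (alph S a) ^ 2 := by
  set r := alph S a with hr
  have hge : r ^ 2 ≤ alph S (a ^ 2) := by
    have hmem : (a - C r) ^ 2 ∈ S := hS.sq_mem _
    have h0 := alph_nonneg_of_mem hS hproper htotal harch hmem
    have hexp : (a - C r) ^ 2 = a ^ 2 + ((-(2 * r)) • a + C (r * r)) := by
      rw [smul_eq_C_mul, map_neg, map_mul, map_ofNat, map_mul]
      ring
    rw [hexp, alph_add hS hproper htotal harch, alph_add hS hproper htotal harch,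
      alph_smul hS hproper htotal harch, alph_C hS hproper harch] at h0
    nlinarith
  have hle : alph S (a ^ 2) ≤ r ^ 2 := by
    obtain ⟨c, hc⟩ := harch (-a)
    rw [sub_neg_eq_add] at hc
    have hcr : 0 ≤ c + r := by
      have := alph_nonneg_of_mem hS hproper htotal harch hc
      rw [alph_add hS hproper htotal harch, alph_C hS hproper harch] at this
      linarith
    refine le_of_forall_pos_le_add fun ε' hε' => ?_
    set ε := min (ε' / (c + r + 1)) 1 with hεdef
    have hεpos : 0 < ε := by
      refine lt_min (by positivity) one_pos
    have hεle : ε * (c + r + 1) ≤ ε' := by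
      calc ε * (c + r + 1) ≤ (ε' / (c + r + 1)) * (c + r + 1) := by
            apply mul_le_mul_of_nonneg_right (min_le_left _ _) (by linarith)
        _ = ε' := by field_simp
    set u := C (r + ε) - a with hu
    set v := C c + a with hv
    have humem : u ∈ S := mem_of_lt hS hproper harch (by linarith)
    have hvmem : v ∈ S := hc
    set s := c + r + ε with hs
    have hspos : 0 < s := by rw [hs]; linarith
    have husum : u + v = C s := by rw [hu, hv, hs]; simp only [map_add]; ring
    have e1 : u ^ 2 * v + v ^ 2 * u = C s * (u * v) := by rw [← husum]; ring
    have e2 : u * v = s⁻¹ • (u ^ 2 * v + v ^ 2 * u) := by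
      rw [e1, smul_eq_C_mul, ← mul_assoc, ← map_mul, inv_mul_cancel₀ (ne_of_gt hspos),
        map_one, one_mul]
    have huv : u * v ∈ S := by
      rw [e2]
      exact hS.smul_mem (by positivity) (hS.add_mem (hS.sq_mul_mem _ hvmem) (hS.sq_mul_mem _ humem))
    have h0 := alph_nonneg_of_mem hS hproper htotal harch huv
    have hdecomp : u * v + a ^ 2 = C ((r + ε) * c) + (r + ε - c) • a := by
      rw [hu, hv, smul_eq_C_mul, map_mul, map_sub, map_add]
      ring
    have halph : alph S (u * v) + alph S (a ^ 2) = (r + ε) * c + (r + ε - c) * r := by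
      have h := congrArg (alph S) hdecomp
      rw [alph_add hS hproper htotal harch, alph_add hS hproper htotal harch,
        alph_smul hS hproper htotal harch, alph_C hS hproper harch] at h
      exact h
    nlinarith [h0, halph, hεle, hεpos, hcr]
  linarith

include htotal in
lemma alph_mul (a b : MvPolynomial (Fin N) ℝ) :
    alph S (a * b) = alph S a * alph S b := by
  have hexp : (a + b) ^ 2 = a ^ 2 + (a * b + (a * b + b ^ 2)) := by ring
  have h1 := congrArg (alph S) hexp
  simp only [alph_sq hS hproper htotal harch, alph_add hS hproper htotal harch] at h1
  nlinarith [h1]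

/-- the point associated with the state -/
noncomputable def statePt (S : Set (MvPolynomial (Fin N) ℝ)) : Fin N → ℝ :=
  fun i => alph S (X i)

include htotal in
lemma alph_eq_eval (q : MvPolynomial (Fin N) ℝ) : alph S q = eval (statePt S) q := by
  induction q using MvPolynomial.induction_on with
  | C r => rw [alph_C hS hproper harch, eval_C]
  | add p q hp hq =>
      rw [alph_add hS hproper htotal harch, eval_add, hp, hq]
  | mul_X p i hp =>
      rw [alph_mul hS hproper htotal harch, eval_mul, eval_X, hp]
      rfl

include htotal in
lemma exists_state_point :
    ∃ x : Fin N → ℝ, ∀ a ∈ S, 0 ≤ eval x a := by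
  refine ⟨statePt S, fun a ha => ?_⟩
  rw [← alph_eq_eval hS hproper htotal harch]
  exact alph_nonneg_of_mem hS hproper htotal harch ha

end state

lemma pow_sub_pow_mem_T {a b : MvPolynomial (Fin N) ℝ} (ha : a ∈ T w) (hb : b ∈ T w)
    (hba : b - a ∈ T w) (m : ℕ) : b ^ m - a ^ m ∈ T w := by
  induction m with
  | zero => simpa using zero_mem_T
  | succ n ih =>
      have key : b ^ (n + 1) - a ^ (n + 1) = b ^ n * (b - a) + (b ^ n - a ^ n) * a := by ring
      rw [key]
      exact add_mem_T (mul_mem_T (pow_mem_T hb n) hba) (mul_mem_T ih ha)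

lemma woermann (hw : ∀ i, 0 < w i) {p q σ : MvPolynomial (Fin N) ℝ}
    (hσ : σ ∈ Sos N) (hq : q ∈ T w) (e : σ * p = 1 + q) :
    ∀ ε : ℝ, 0 < ε → p + C ε ∈ T w := by
  obtain ⟨c, hc1, hcu, hcl⟩ := bdd_all hw p
  obtain ⟨k, hk1, hku, _⟩ := bdd_all hw σ
  have hcpos : (0:ℝ) < c := by linarith
  have hkpos : (0:ℝ) < k := by linarith
  set A : MvPolynomial (Fin N) ℝ := C k - σ with hA
  have hAT : A ∈ T w := hku
  have hq' : σ * p - 1 ∈ T w := by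
    have : σ * p - 1 = q := by linear_combination e
    rw [this]; exact hq
  -- claim 1
  have claim1 : ∀ m : ℕ, ∃ s ∈ T w, p = s + C (((k ^ m)⁻¹ : ℝ)) * (p * A ^ m) := by
    intro m
    induction m with
    | zero => exact ⟨0, zero_mem_T, by simp⟩
    | succ n ih =>
        obtain ⟨s, hsT, hs⟩ := ih
        have key : C k * (p * A ^ n) = (σ * p - 1) * A ^ n + A ^ n + p * A ^ (n + 1) := by
          rw [hA]; ring
        have hck : (C ((k ^ n)⁻¹ : ℝ) : MvPolynomial (Fin N) ℝ)
            = C ((k ^ (n+1))⁻¹ : ℝ) * C k := by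
          rw [← map_mul]; congr 1
          rw [pow_succ, mul_inv]
          field_simp
        refine ⟨s + C ((k ^ (n + 1))⁻¹ : ℝ) * ((σ * p - 1) * A ^ n + A ^ n),
          add_mem_T hsT (by
            rw [← smul_eq_C_mul]
            exact smul_mem_T (by positivity)
              (add_mem_T (mul_mem_T hq' (pow_mem_T hAT n)) (pow_mem_T hAT n))), ?_⟩
        linear_combination hs + C ((k ^ (n+1))⁻¹ : ℝ) * key + (p * A ^ n) * hck
  -- claim 2
  have claim2 : ∀ m : ℕ, p + C (c * ((k - 1/c) ^ m / k ^ m)) ∈ T w := by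
    intro m
    obtain ⟨s, hsT, hs⟩ := claim1 m
    set B : MvPolynomial (Fin N) ℝ := C (k - 1/c) with hB
    have hBA : B - A ∈ T w := by
      have hmem : (c⁻¹ : ℝ) • (σ * (C c - p) + (σ * p - 1)) ∈ T w :=
        smul_mem_T (by positivity)
          (add_mem_T (mul_mem_T (sos_mem_T hσ) hcu) hq')
      have heq : (c⁻¹ : ℝ) • (σ * (C c - p) + (σ * p - 1)) = B - A := by
        have e3 : σ * (C c - p) + (σ * p - 1) = C c * σ - 1 := by ring
        rw [e3, smul_sub, smul_eq_C_mul (C c * σ), ← mul_assoc, ← map_mul,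
          inv_mul_cancel₀ (ne_of_gt hcpos), map_one, one_mul, hB, hA]
        rw [map_sub (C : ℝ →+* MvPolynomial (Fin N) ℝ) k (1/c)]
        have : (c⁻¹ : ℝ) • (1 : MvPolynomial (Fin N) ℝ) = C (1/c) := by
          rw [smul_eq_C_mul, mul_one, one_div]
        rw [this]
        ring
      rwa [heq] at hmem
    have hBT : B ∈ T w := C_mem_T (by
      have : 1/c ≤ 1 := by
        rw [div_le_one hcpos]; exact hc1
      linarith)
    have hBm : (B : MvPolynomial (Fin N) ℝ) ^ m = C ((k - 1/c) ^ m) := by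
      rw [hB, ← map_pow]
    have hBmAm : B ^ m - A ^ m ∈ T w := pow_sub_pow_mem_T hAT hBT hBA m
    rw [hBm] at hBmAm
    have hfinal : p + C (c * ((k - 1/c) ^ m / k ^ m))
        = s + ((k ^ m)⁻¹ : ℝ) • ((p + C c) * A ^ m)
          + ((c / k ^ m) : ℝ) • (C ((k - 1/c) ^ m) - A ^ m) := by
      rw [smul_eq_C_mul, smul_eq_C_mul]
      have hc1' : (C (c * ((k - 1/c) ^ m / k ^ m)) : MvPolynomial (Fin N) ℝ)
          = C (c / k ^ m) * C ((k - 1/c) ^ m) := by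
        rw [← map_mul]; congr 1; ring
      have hc2' : (C ((k ^ m)⁻¹ : ℝ) : MvPolynomial (Fin N) ℝ) * C c = C (c / k ^ m) := by
        rw [← map_mul]; congr 1; ring
      linear_combination hs + hc1' + (- (A ^ m)) * hc2'
    rw [hfinal]
    exact add_mem_T (add_mem_T hsT (smul_mem_T (by positivity)
        (mul_mem_T (by rw [add_comm]; exact hcl) (pow_mem_T hAT m))))
      (smul_mem_T (by positivity) hBmAm)
  -- conclude
  intro ε hε
  set δ : ℝ := (k - 1/c) / k with hδdef
  have hδ0 : 0 ≤ δ := by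
    apply div_nonneg _ (le_of_lt hkpos)
    have : 1/c ≤ 1 := by rw [div_le_one hcpos]; exact hc1
    linarith
  have hδ1 : δ < 1 := by
    rw [hδdef, div_lt_one hkpos]
    have : 0 < 1/c := by positivity
    linarith
  obtain ⟨m, hm⟩ := exists_pow_lt_of_lt_one (x := ε / c) (by positivity) hδ1
  have hδm : (k - 1/c) ^ m / k ^ m = δ ^ m := by
    rw [hδdef, div_pow]
  have hcδ : c * ((k - 1/c) ^ m / k ^ m) ≤ ε := by
    rw [hδm]
    calc c * δ ^ m ≤ c * (ε / c) := by
          apply mul_le_mul_of_nonneg_left (le_of_lt hm) (le_of_lt hcpos)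
      _ = ε := by field_simp
  have key : p + C ε = (p + C (c * ((k - 1/c) ^ m / k ^ m)))
      + C (ε - c * ((k - 1/c) ^ m / k ^ m)) := by
    rw [map_sub]; ring
  rw [key]
  exact add_mem_T (claim2 m) (C_mem_T (by linarith))

/-- Putinar's positivstellensatz with ε-slack, for the ellipsoid preordering -/
lemma putinar_eps (hw : ∀ i, 0 < w i) {p : MvPolynomial (Fin N) ℝ}
    (hpos : ∀ x : Fin N → ℝ, 0 ≤ eval x (gp w) → 0 < eval x p) :
    ∀ ε : ℝ, 0 < ε → p + C ε ∈ T w := by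
  intro ε hε
  by_cases hp : p ∈ T w
  · exact add_mem_T hp (C_mem_T (le_of_lt hε))
  set S₀ : Set (MvPolynomial (Fin N) ℝ) :=
    {x | ∃ t ∈ T w, ∃ σ ∈ Sos N, x = t + (-p) * σ} with hS₀
  have hTsub : T w ⊆ S₀ := fun t ht => ⟨t, ht, 0, zero_mem_Sos, by ring⟩
  have hqm : IsQM S₀ := by
    refine ⟨hTsub one_mem_T, ?_, ?_⟩
    · rintro x ⟨t, ht, σ, hσ, rfl⟩ y ⟨u, hu, τ, hτ, rfl⟩
      exact ⟨t + u, add_mem_T ht hu, σ + τ, add_mem_Sos hσ hτ, by ring⟩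
    · rintro q x ⟨t, ht, σ, hσ, rfl⟩
      exact ⟨q ^ 2 * t, mul_mem_T (sq_mem_T q) ht, q ^ 2 * σ,
        mul_mem_Sos (sq_mem_Sos q) hσ, by ring⟩
  by_cases himp : (-1 : MvPolynomial (Fin N) ℝ) ∈ S₀
  · obtain ⟨t, ht, σ, hσ, he⟩ := himp
    have e : σ * p = 1 + t := by linear_combination he
    exact woermann hw hσ ht e ε hε
  · obtain ⟨S, hsub, hS, hproper, hmax⟩ := exists_maximal_qm S₀ hqm himp
    have htotal := total_of_maximal hS hproper hmax
    have harch : ∀ a : MvPolynomial (Fin N) ℝ, ∃ c : ℝ, C c - a ∈ S := by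
      intro a
      obtain ⟨c, _, hcu, _⟩ := bdd_all hw a
      exact ⟨c, hsub (hTsub hcu)⟩
    obtain ⟨x, hx⟩ := exists_state_point hS hproper htotal harch
    have hgp : 0 ≤ eval x (gp w) := hx _ (hsub (hTsub gp_mem_T))
    have hnegp : -p ∈ S := hsub ⟨0, zero_mem_T, 1, one_mem_Sos, by ring⟩
    have hple := hx _ hnegp
    rw [map_neg] at hple
    have := hpos x hgp
    linarith


section Qmodsec
variable {w : Fin N → ℝ}

lemma isSOS_zero (r : ℕ) : IsSOS r (0 : MvPolynomial (Fin N) ℝ) :=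
  ⟨0, fun j => j.elim0, fun j => j.elim0, by simp⟩

lemma isSOS_sq {q : MvPolynomial (Fin N) ℝ} {r : ℕ} (h : q.totalDegree ≤ r) :
    IsSOS r (q ^ 2) := ⟨1, fun _ => q, fun _ => h, by simp⟩

lemma isSOS_mono {σ : MvPolynomial (Fin N) ℝ} {r r' : ℕ} (h : IsSOS r σ) (hrr' : r ≤ r') :
    IsSOS r' σ := by
  obtain ⟨k, q, hdeg, rfl⟩ := h
  exact ⟨k, q, fun j => le_trans (hdeg j) hrr', rfl⟩

lemma Qmod_mono {r r' : ℕ} (hrr' : r ≤ r') : Qmod w r ⊆ Qmod w r' := by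
  rintro a ⟨σ₀, σ₁, h₀, h₁, rfl⟩
  exact ⟨σ₀, σ₁, isSOS_mono h₀ hrr', isSOS_mono h₁ (Nat.sub_le_sub_right hrr' 1), rfl⟩

lemma sq_mem_Qmod {q : MvPolynomial (Fin N) ℝ} {r : ℕ} (h : q.totalDegree ≤ r) :
    q ^ 2 ∈ Qmod w r :=
  ⟨q ^ 2, 0, isSOS_sq h, isSOS_zero _, by ring⟩

lemma sqg_mem_Qmod {q : MvPolynomial (Fin N) ℝ} {r : ℕ} (h : q.totalDegree ≤ r - 1) :
    q ^ 2 * (1 - ∑ i, C (w i) * X i ^ 2) ∈ Qmod w r :=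
  ⟨0, q ^ 2, isSOS_zero _, isSOS_sq h, by ring⟩

section Lfunc
variable (L : MvPolynomial (Fin N) ℝ →ₗ[ℝ] ℝ) {r : ℕ}
  (hL1 : L 1 = 1) (hLpos : ∀ q ∈ Qmod w r, 0 ≤ L q)

include hL1 in
lemma L_C (c : ℝ) : L (C c) = c := by
  have h : (C c : MvPolynomial (Fin N) ℝ) = c • (1 : MvPolynomial (Fin N) ℝ) := by
    rw [smul_eq_C_mul, mul_one]
  rw [h, map_smul, hL1, smul_eq_mul, mul_one]

include hLpos in
lemma L_sq_nonneg {q : MvPolynomial (Fin N) ℝ} (h : q.totalDegree ≤ r) : 0 ≤ L (q ^ 2) :=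
  hLpos _ (sq_mem_Qmod h)

include hLpos in
lemma L_CS {a b : MvPolynomial (Fin N) ℝ} (ha : a.totalDegree ≤ r) (hb : b.totalDegree ≤ r) :
    (L (a * b)) ^ 2 ≤ L (a ^ 2) * L (b ^ 2) := by
  have hq : ∀ t : ℝ, 0 ≤ L (b ^ 2) * (t * t) + (2 * L (a * b)) * t + L (a ^ 2) := by
    intro t
    have hd : (a + t • b).totalDegree ≤ r :=
      le_trans (totalDegree_add a (t • b))
        (max_le ha (le_trans (totalDegree_smul_le t b) hb))
    have h0 := L_sq_nonneg L hLpos hd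
    have hexp : (a + t • b) ^ 2
        = a ^ 2 + (t • (a * b) + (t • (a * b) + (t * t) • b ^ 2)) := by
      simp only [smul_eq_C_mul, map_mul]
      ring
    rw [hexp, map_add, map_add, map_add] at h0
    simp only [map_smul, smul_eq_mul] at h0
    linarith
  have hd := discrim_le_zero hq
  rw [discrim] at hd
  nlinarith [hd]

/-- the uniform bound constant -/
noncomputable def Bc (w : Fin N → ℝ) : ℝ := 1 + ∑ i, 1 / w i

lemma Bc_ge_one (hw : ∀ i, 0 < w i) : 1 ≤ Bc w := by
  have : 0 ≤ ∑ i, 1 / w i :=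
    Finset.sum_nonneg fun i _ => by have := hw i; positivity
  rw [Bc]; linarith

lemma inv_le_Bc (hw : ∀ i, 0 < w i) (i : Fin N) : 1 / w i ≤ Bc w := by
  rw [Bc]
  have h := Finset.single_le_sum (f := fun j => 1 / w j)
    (fun j _ => by have := hw j; positivity) (Finset.mem_univ i)
  linarith

/-- weight of a multidegree -/
def wt (β : Fin N →₀ ℕ) : ℕ := ∑ i, β i

lemma totalDegree_mono {β : Fin N →₀ ℕ} : (monomial β (1:ℝ)).totalDegree = wt β := by
  rw [totalDegree_monomial _ (one_ne_zero), Finsupp.sum_fintype _ _ fun i => rfl]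
  rfl

lemma mono_mul_mono (β γ : Fin N →₀ ℕ) :
    monomial β (1:ℝ) * monomial γ (1:ℝ) = monomial (β + γ) (1:ℝ) := by
  rw [monomial_mul, one_mul]

include hL1 hLpos in
lemma L_mono_sq_le (hw : ∀ i, 0 < w i) :
    ∀ (d : ℕ) (β : Fin N →₀ ℕ), wt β = d → d ≤ r →
      L ((monomial β (1:ℝ)) ^ 2) ≤ Bc w ^ d := by
  intro d
  induction d with
  | zero =>
      intro β hβ _
      have hβ0 : β = 0 := by
        ext i
        have := (Finset.sum_eq_zero_iff_of_nonneg
          (fun j _ => Nat.zero_le (β j))).mp hβ i (Finset.mem_univ i)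
        simpa using this
      subst hβ0
      rw [show (monomial (0 : Fin N →₀ ℕ)) (1:ℝ) = 1 by
        rw [show ((monomial (0 : Fin N →₀ ℕ)) (1:ℝ)) = C 1 by rw [monomial_zero'], map_one]]
      simp [hL1]
  | succ n ih =>
      intro β hβ hle
      -- find i with β i > 0
      have hex : ∃ i, 0 < β i := by
        by_contra hno
        push_neg at hno
        have : wt β = 0 := Finset.sum_eq_zero fun i _ => Nat.le_zero.mp (hno i)
        omega
      obtain ⟨i, hi⟩ := hex
      set β' := β - Finsupp.single i 1 with hβ'
      have hsingle_le : Finsupp.single i 1 ≤ β := Finsupp.single_le_iff.mpr hi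
      have hβeq : Finsupp.single i 1 + β' = β := add_tsub_cancel_of_le hsingle_le
      have hwtβ' : wt β' = n := by
        have h1 : wt (Finsupp.single i 1 + β') = wt (Finsupp.single i 1) + wt β' := by
          rw [wt, wt, wt]
          rw [← Finset.sum_add_distrib]
          exact Finset.sum_congr rfl fun j _ => by rw [Finsupp.add_apply]
        have h2 : wt (Finsupp.single i 1) = 1 := by
          rw [wt]
          rw [Finset.sum_congr rfl fun j (_ : j ∈ Finset.univ) =>
            (Finsupp.single_apply : (Finsupp.single i 1 : Fin N →₀ ℕ) j = if i = j then 1 else 0)]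
          rw [Finset.sum_ite_eq Finset.univ i (fun _ => 1)]
          simp
        rw [hβeq] at h1
        omega
      have hβ'deg : (monomial β' (1:ℝ)).totalDegree ≤ r - 1 := by
        rw [totalDegree_mono, hwtβ']
        omega
      have hloc := hLpos _ (sqg_mem_Qmod hβ'deg)
      have hexp : (monomial β' (1:ℝ)) ^ 2 * (1 - ∑ j, C (w j) * X j ^ 2)
          = (monomial β' (1:ℝ)) ^ 2
            - ∑ j, (w j) • ((X j * monomial β' (1:ℝ)) ^ 2) := by
        rw [mul_sub, mul_one, Finset.mul_sum]
        congr 1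
        refine Finset.sum_congr rfl fun j _ => ?_
        rw [smul_eq_C_mul]
        ring
      rw [hexp, map_sub, map_sum] at hloc
      simp only [map_smul, smul_eq_mul] at hloc
      have hterm_nonneg : ∀ j : Fin N, 0 ≤ L ((X j * monomial β' (1:ℝ)) ^ 2) := by
        intro j
        refine L_sq_nonneg L hLpos ?_
        calc (X j * monomial β' (1:ℝ)).totalDegree
            ≤ (X j).totalDegree + (monomial β' (1:ℝ)).totalDegree := totalDegree_mul _ _
          _ = 1 + n := by rw [totalDegree_X, totalDegree_mono, hwtβ']
          _ ≤ r := by omega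
      have hsum_ge : w i * L ((X i * monomial β' (1:ℝ)) ^ 2)
          ≤ ∑ j, w j * L ((X j * monomial β' (1:ℝ)) ^ 2) :=
        Finset.single_le_sum (f := fun j => w j * L ((X j * monomial β' (1:ℝ)) ^ 2))
          (fun j _ => mul_nonneg (le_of_lt (hw j)) (hterm_nonneg j)) (Finset.mem_univ i)
      have hih := ih β' hwtβ' (by omega)
      have hmoeq : monomial β (1:ℝ) = X i * monomial β' (1:ℝ) := by
        rw [show (X i : MvPolynomial (Fin N) ℝ) = monomial (Finsupp.single i 1) 1 from rfl,
          mono_mul_mono, hβeq]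
      rw [hmoeq]
      have hwi := hw i
      have hBcn : (0:ℝ) ≤ Bc w ^ n := by
        have := Bc_ge_one hw; positivity
      have hinv := inv_le_Bc hw i
      -- w i * L_i ≤ Bc^n  and  1/w i ≤ Bc
      have h1 : w i * L ((X i * monomial β' (1:ℝ)) ^ 2) ≤ Bc w ^ n := by linarith
      have h2 : L ((X i * monomial β' (1:ℝ)) ^ 2) ≤ Bc w ^ n * (1 / w i) := by
        rw [mul_one_div, le_div_iff₀ hwi]
        linarith [h1, mul_comm (w i) (L ((X i * monomial β' (1:ℝ)) ^ 2))]
      calc L ((X i * monomial β' (1:ℝ)) ^ 2) ≤ Bc w ^ n * (1 / w i) := h2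
        _ ≤ Bc w ^ n * Bc w := by
            apply mul_le_mul_of_nonneg_left hinv hBcn
        _ = Bc w ^ (n + 1) := by rw [pow_succ]

omit hL1 hLpos in
lemma exists_le_wt : ∀ (d : ℕ) (β : Fin N →₀ ℕ), d ≤ wt β → ∃ γ, γ ≤ β ∧ wt γ = d := by
  intro d
  induction d with
  | zero => exact fun β _ => ⟨0, zero_le, by simp [wt]⟩
  | succ n ih =>
      intro β hβ
      obtain ⟨γ, hγle, hγwt⟩ := ih β (by omega)
      have hlt : ∃ i, γ i < β i := by
        by_contra hno
        push_neg at hno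
        have : wt β ≤ wt γ := Finset.sum_le_sum fun i _ => hno i
        omega
      obtain ⟨i, hi⟩ := hlt
      refine ⟨γ + Finsupp.single i 1, ?_, ?_⟩
      · rw [Finsupp.le_def]
        intro j
        rw [Finsupp.add_apply, Finsupp.single_apply]
        by_cases hj : i = j
        · subst hj; simpa using hi
        · simp [hj]
          exact Finsupp.le_def.mp hγle j
      · rw [wt, Finset.sum_congr rfl fun j (_ : j ∈ Finset.univ) => Finsupp.add_apply γ _ j,
          Finset.sum_add_distrib]
        have : ∑ j, (Finsupp.single i 1 : Fin N →₀ ℕ) j = 1 := by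
          rw [Finset.sum_congr rfl fun j (_ : j ∈ Finset.univ) =>
            (Finsupp.single_apply : (Finsupp.single i 1 : Fin N →₀ ℕ) j = if i = j then 1 else 0)]
          rw [Finset.sum_ite_eq Finset.univ i (fun _ => 1)]
          simp
        rw [this]
        rw [wt] at hγwt
        omega

omit hL1 hLpos in
lemma wt_add (x y : Fin N →₀ ℕ) : wt (x + y) = wt x + wt y := by
  rw [wt, wt, wt, ← Finset.sum_add_distrib]
  exact Finset.sum_congr rfl fun j _ => Finsupp.add_apply x y j

include hL1 hLpos in
lemma L_mono_abs_le (hw : ∀ i, 0 < w i) {β : Fin N →₀ ℕ} (hβ : wt β ≤ 2 * r) :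
    |L (monomial β (1:ℝ))| ≤ Bc w ^ r := by
  have hB1 := Bc_ge_one hw
  have hBr1 : (1:ℝ) ≤ Bc w ^ r := one_le_pow₀ hB1
  by_cases hcase : wt β ≤ r
  · have hcs := L_CS L hLpos (a := monomial β (1:ℝ)) (b := 1)
      (by rw [totalDegree_mono]; exact hcase) (by rw [totalDegree_one]; omega)
    rw [mul_one, one_pow, hL1, mul_one] at hcs
    have hbound : L ((monomial β (1:ℝ)) ^ 2) ≤ Bc w ^ r :=
      le_trans (L_mono_sq_le L hL1 hLpos hw (wt β) β rfl hcase)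
        (pow_le_pow_right₀ hB1 hcase)
    rw [abs_le]
    constructor <;> nlinarith [hcs, hbound, hBr1]
  · push_neg at hcase
    set d := wt β - r with hd
    have hdr : d ≤ r := by omega
    obtain ⟨γ, hγle, hγwt⟩ := exists_le_wt d β (by omega)
    have hβeq : γ + (β - γ) = β := add_tsub_cancel_of_le hγle
    have hδwt : wt (β - γ) = r := by
      have := wt_add γ (β - γ)
      rw [hβeq] at this
      omega
    have hcs := L_CS L hLpos (a := monomial γ (1:ℝ)) (b := monomial (β - γ) (1:ℝ))
      (by rw [totalDegree_mono]; omega) (by rw [totalDegree_mono]; omega)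
    rw [mono_mul_mono, hβeq] at hcs
    have hb1 : L ((monomial γ (1:ℝ)) ^ 2) ≤ Bc w ^ r :=
      le_trans (L_mono_sq_le L hL1 hLpos hw (wt γ) γ rfl (by omega))
        (pow_le_pow_right₀ hB1 (by omega))
    have hb2 : L ((monomial (β - γ) (1:ℝ)) ^ 2) ≤ Bc w ^ r :=
      L_mono_sq_le L hL1 hLpos hw r (β - γ) hδwt (le_refl r)
    have hnn1 : 0 ≤ L ((monomial γ (1:ℝ)) ^ 2) :=
      L_sq_nonneg L hLpos (by rw [totalDegree_mono]; omega)
    have hnn2 : 0 ≤ L ((monomial (β - γ) (1:ℝ)) ^ 2) :=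
      L_sq_nonneg L hLpos (by rw [totalDegree_mono]; omega)
    rw [abs_le]
    constructor <;> nlinarith [hcs, hb1, hb2, hBr1, hnn1, hnn2]

include hL1 hLpos in
lemma L_p_lowerbound (hw : ∀ i, 0 < w i) {p : MvPolynomial (Fin N) ℝ}
    (hdeg : p.totalDegree ≤ 2 * r) :
    -((∑ β ∈ p.support, |coeff β p|) * Bc w ^ r) ≤ L p := by
  have hterm : ∀ β ∈ p.support, -(|coeff β p| * Bc w ^ r) ≤ L (monomial β (coeff β p)) := by
    intro β hβ
    have hwtβ : wt β ≤ 2 * r := by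
      have h1 := le_totalDegree hβ
      have h2 : wt β = β.sum fun _ e => e := by
        rw [Finsupp.sum_fintype _ _ fun i => rfl]; rfl
      omega
    have hmono := L_mono_abs_le L hL1 hLpos hw hwtβ
    have hsm : monomial β (coeff β p) = (coeff β p) • monomial β (1:ℝ) := by
      rw [smul_monomial, smul_eq_mul, mul_one]
    rw [hsm, map_smul, smul_eq_mul]
    have habs : |coeff β p * L (monomial β (1:ℝ))| ≤ |coeff β p| * Bc w ^ r := by
      rw [abs_mul]
      exact mul_le_mul_of_nonneg_left hmono (abs_nonneg _)
    have := neg_abs_le (coeff β p * L (monomial β (1:ℝ)))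
    linarith
  have hsum := Finset.sum_le_sum hterm
  have hL : L p = ∑ β ∈ p.support, L (monomial β (coeff β p)) := by
    conv_lhs => rw [p.as_sum]
    exact map_sum L _ _
  rw [hL]
  refine le_trans (le_of_eq ?_) hsum
  rw [Finset.sum_mul, ← Finset.sum_neg_distrib]

end Lfunc
end Qmodsec

section final
variable {w : Fin N → ℝ}

lemma sos_isSOS {σ : MvPolynomial (Fin N) ℝ} (h : σ ∈ Sos N) : ∃ r, IsSOS r σ := by
  obtain ⟨k, q, rfl⟩ := sos_elim h
  exact ⟨Finset.univ.sup fun j => (q j).totalDegree, k, q,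
    fun j => Finset.le_sup (f := fun j => (q j).totalDegree) (Finset.mem_univ j), rfl⟩

lemma T_mem_Qmod {a : MvPolynomial (Fin N) ℝ} (h : a ∈ T w) :
    ∃ r₀, ∀ r, r₀ ≤ r → a ∈ Qmod w r := by
  obtain ⟨σ₀, h₀, σ₁, h₁, rfl⟩ := T_elim h
  obtain ⟨r₀, hr₀⟩ := sos_isSOS h₀
  obtain ⟨r₁, hr₁⟩ := sos_isSOS h₁
  refine ⟨max r₀ (r₁ + 1), fun r hr => ?_⟩
  refine ⟨σ₀, σ₁, isSOS_mono hr₀ (by omega), isSOS_mono hr₁ (by omega), rfl⟩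

/-- evaluation as a linear map -/
noncomputable def evalL (x : Fin N → ℝ) : MvPolynomial (Fin N) ℝ →ₗ[ℝ] ℝ where
  toFun := eval x
  map_add' := fun a b => map_add _ a b
  map_smul' := fun c q => by simp [smul_eq_C_mul]

lemma evalL_apply (x : Fin N → ℝ) (q : MvPolynomial (Fin N) ℝ) : evalL x q = eval x q := rfl

lemma eval_gp (x : Fin N → ℝ) : eval x (gp w) = 1 - ∑ i, w i * x i ^ 2 := by
  simp [gp]

lemma eval_isSOS_nonneg {σ : MvPolynomial (Fin N) ℝ} {r : ℕ} (h : IsSOS r σ)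
    (x : Fin N → ℝ) : 0 ≤ eval x σ := by
  obtain ⟨k, q, _, rfl⟩ := h
  rw [map_sum]
  exact Finset.sum_nonneg fun j _ => by rw [map_pow]; positivity

lemma eval_feasible {x : Fin N → ℝ} (hx : ∑ i, w i * x i ^ 2 ≤ 1) {r : ℕ} :
    ∀ q ∈ Qmod w r, 0 ≤ eval x q := by
  rintro q ⟨σ₀, σ₁, h₀, h₁, rfl⟩
  rw [map_add, map_mul]
  have hg : 0 ≤ eval x (1 - ∑ i, C (w i) * X i ^ 2) := by
    have := eval_gp (w := w) x
    rw [gp] at this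
    rw [this]
    linarith
  have := eval_isSOS_nonneg h₀ x
  have := eval_isSOS_nonneg h₁ x
  positivity

theorem outer_relaxation_convergence' (N : ℕ) (hN : 0 < N)
    (w : Fin N → ℝ) (hw : ∀ i, 0 < w i)
    (K : Set (Fin N → ℝ)) (hK : K = {x | ∑ i, w i * x i ^ 2 ≤ 1})
    (p : MvPolynomial (Fin N) ℝ) :
    sSup {v | ∃ r : ℕ, p.totalDegree ≤ 2 * r ∧ v = pOut w p r} =
      sInf {v | ∃ x ∈ K, v = eval x p} := by
  -- compactness of K
  have hf : Continuous fun x : Fin N → ℝ => ∑ i, w i * x i ^ 2 :=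
    continuous_finset_sum _ fun i _ => (continuous_const.mul ((continuous_apply i).pow 2))
  have hKclosed : IsClosed K := by
    rw [hK]
    exact IsClosed.preimage hf isClosed_Iic
  have hKsub : K ⊆ Metric.closedBall 0 (Bc w) := by
    intro x hx
    rw [hK] at hx
    rw [Metric.mem_closedBall, dist_zero_right]
    refine (pi_norm_le_iff_of_nonneg (by linarith [Bc_ge_one hw])).mpr fun i => ?_
    have hterm : w i * x i ^ 2 ≤ 1 := by
      have hs := Finset.single_le_sum (f := fun j => w j * x j ^ 2)
        (fun j _ => by have := hw j; positivity) (Finset.mem_univ i)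
      exact le_trans hs hx
    have hsq : x i ^ 2 ≤ 1 / w i := by
      rw [le_div_iff₀ (hw i)]
      linarith [mul_comm (w i) (x i ^ 2)]
    have habs : |x i| ≤ 1 + x i ^ 2 := by
      rcases le_or_gt (|x i|) 1 with h | h
      · nlinarith [sq_nonneg (x i)]
      · nlinarith [sq_abs (x i), abs_nonneg (x i)]
    calc ‖x i‖ = |x i| := rfl
      _ ≤ 1 + x i ^ 2 := habs
      _ ≤ 1 + 1 / w i := by linarith
      _ ≤ Bc w := by
          have h1 := inv_le_Bc hw i
          have : (1:ℝ) + 1 / w i ≤ 1 + Bc w := by linarith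
          -- need 1 + 1/w i ≤ Bc w : Bc = 1 + ∑ 1/w j ≥ 1 + 1/w i
          rw [Bc]
          have hs := Finset.single_le_sum (f := fun j => 1 / w j)
            (fun j _ => by have := hw j; positivity) (Finset.mem_univ i)
          linarith
  have hKcompact : IsCompact K :=
    Metric.isCompact_iff_isClosed_bounded.mpr
      ⟨hKclosed, (Metric.isBounded_closedBall).subset hKsub⟩
  have hKne : K.Nonempty := by
    refine ⟨0, ?_⟩
    rw [hK]
    simp
  obtain ⟨x₀, hx₀K, hx₀min⟩ := hKcompact.exists_isMinOn hKne
    ((p.continuous_eval).continuousOn)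
  set m : ℝ := eval x₀ p with hm
  have hmin : ∀ x ∈ K, m ≤ eval x p := fun x hx => hx₀min hx
  -- RHS = m
  have hRHS : sInf {v | ∃ x ∈ K, v = eval x p} = m := by
    apply le_antisymm
    · exact csInf_le ⟨m, by rintro v ⟨x, hx, rfl⟩; exact hmin x hx⟩ ⟨x₀, hx₀K, rfl⟩
    · exact le_csInf ⟨m, x₀, hx₀K, rfl⟩ (by rintro v ⟨x, hx, rfl⟩; exact hmin x hx)
  rw [hRHS]
  -- feasible value sets
  set Tr : ℕ → Set ℝ := fun r => {v | ∃ L : MvPolynomial (Fin N) ℝ →ₗ[ℝ] ℝ,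
    L 1 = 1 ∧ (∀ q ∈ Qmod w r, 0 ≤ L q) ∧ v = L p} with hTr
  have hevalmem : ∀ r, ∀ x ∈ K, eval x p ∈ Tr r := by
    intro r x hx
    refine ⟨evalL x, by rw [evalL_apply, map_one], ?_, rfl⟩
    intro q hq
    rw [evalL_apply]
    exact eval_feasible (by rw [hK] at hx; exact hx) q hq
  have hTrne : ∀ r, (Tr r).Nonempty := fun r => ⟨eval x₀ p, hevalmem r x₀ hx₀K⟩
  have hTrbdd : ∀ r : ℕ, p.totalDegree ≤ 2 * r → BddBelow (Tr r) := by
    intro r hdeg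
    refine ⟨-((∑ β ∈ p.support, |coeff β p|) * Bc w ^ r), ?_⟩
    rintro v ⟨L, hL1, hLpos, rfl⟩
    exact L_p_lowerbound L hL1 hLpos hw hdeg
  -- upper bound : each pOut ≤ m
  have hub : ∀ v ∈ {v | ∃ r : ℕ, p.totalDegree ≤ 2 * r ∧ v = pOut w p r}, v ≤ m := by
    rintro v ⟨r, hdeg, rfl⟩
    exact csInf_le (hTrbdd r hdeg) (hevalmem r x₀ hx₀K)
  have hSne : {v | ∃ r : ℕ, p.totalDegree ≤ 2 * r ∧ v = pOut w p r}.Nonempty :=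
    ⟨pOut w p p.totalDegree, p.totalDegree, by omega, rfl⟩
  apply le_antisymm
  · exact csSup_le hSne hub
  -- lower bound: ∀ ε > 0, m - ε ≤ sSup
  have hlow : ∀ ε : ℝ, 0 < ε → m - ε ≤ sSup {v | ∃ r : ℕ, p.totalDegree ≤ 2 * r ∧ v = pOut w p r} := by
    intro ε hε
    -- Putinar certificate for p + C (ε - m)
    have hpos : ∀ x : Fin N → ℝ, 0 ≤ eval x (gp w) → 0 < eval x (p + C (ε / 2 - m)) := by
      intro x hx
      have hxK : x ∈ K := by
        rw [hK]
        rw [eval_gp] at hx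
        simpa using sub_nonneg.mp (by linarith [hx])
      have := hmin x hxK
      rw [map_add, eval_C]
      linarith
    have hcert := putinar_eps hw hpos (ε / 2) (by linarith)
    have hcert' : p + C (ε - m) ∈ T w := by
      have : p + C (ε / 2 - m) + C (ε / 2) = p + C (ε - m) := by
        rw [add_assoc, ← map_add]
        congr 2
        ring
      rwa [this] at hcert
    obtain ⟨r₀, hr₀⟩ := T_mem_Qmod hcert'
    set r := max r₀ p.totalDegree with hrdef
    have hrr1 : p.totalDegree ≤ r := le_max_right _ _
    have hrr0 : r₀ ≤ r := le_max_left _ _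
    have hdeg2 : p.totalDegree ≤ 2 * r := by omega
    have hcertr : p + C (ε - m) ∈ Qmod w r := hr₀ r hrr0
    have hlb : ∀ v ∈ Tr r, m - ε ≤ v := by
      rintro v ⟨L, hL1, hLpos, rfl⟩
      have h0 := hLpos _ hcertr
      rw [map_add, L_C L hL1] at h0
      linarith
    have hpOut : m - ε ≤ pOut w p r := le_csInf (hTrne r) hlb
    have hmem : pOut w p r ∈ {v | ∃ r : ℕ, p.totalDegree ≤ 2 * r ∧ v = pOut w p r} :=
      ⟨r, hdeg2, rfl⟩
    have := le_csSup ⟨m, hub⟩ hmem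
    linarith
  by_contra hcon
  push_neg at hcon
  have h2 := hlow ((m - sSup {v | ∃ r : ℕ, p.totalDegree ≤ 2 * r ∧ v = pOut w p r}) / 2)
    (by linarith)
  linarith

end final

end OuterRel

/-- The outer relaxation values converge to the global minimum of `p` on the ellipsoid
`K = {x : ∑ᵢ wᵢ xᵢ² ≤ 1}`: `sup_{2r ≥ deg p} p^out_r = min_{x ∈ K} p(x)`. -/
theorem outer_relaxation_convergence (N : ℕ) (hN : 0 < N)
    (w : Fin N → ℝ) (hw : ∀ i, 0 < w i)
    (K : Set (Fin N → ℝ)) (hK : K = {x | ∑ i, w i * x i ^ 2 ≤ 1})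
    (p : MvPolynomial (Fin N) ℝ) :
    sSup {v | ∃ r : ℕ, p.totalDegree ≤ 2 * r ∧ v = pOut w p r} =
      sInf {v | ∃ x ∈ K, v = eval x p} :=
  OuterRel.outer_relaxation_convergence' N hN w hw K hK p
end

section
/- Let γ be a finite Borel measure on ℝ^N with γ(ℝ^N \ K) = 0 whose topological support equals K. Then the inner relaxation values converge to the global minimum: inf_{r ∈ ℕ} p^inn_r = min_{x ∈ K} p(x). -/
open MvPolynomial MeasureTheory

/-- The inner moment-SOS relaxation value
`p^inn_r = inf {∫ p·σ dγ : σ ∈ Q_r, ∫ σ dγ = 1}`. -/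
noncomputable def pInn {N : ℕ} (w : Fin N → ℝ) (p : MvPolynomial (Fin N) ℝ)
    (γ : Measure (Fin N → ℝ)) (r : ℕ) : ℝ :=
  sInf {v | ∃ σ ∈ Qmod w r, (∫ x, eval x σ ∂γ) = 1 ∧
    v = ∫ x, eval x p * eval x σ ∂γ}

lemma isSOS_eval_nonneg {N r : ℕ} {σ : MvPolynomial (Fin N) ℝ} (h : IsSOS r σ)
    (x : Fin N → ℝ) : 0 ≤ eval x σ := by
  obtain ⟨k, q, -, rfl⟩ := h
  simp only [map_sum, map_pow]
  positivity

lemma qmod_eval_nonneg {N : ℕ} {w : Fin N → ℝ} {r : ℕ} {q : MvPolynomial (Fin N) ℝ}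
    (hq : q ∈ Qmod w r) {x : Fin N → ℝ} (hx : ∑ i, w i * x i ^ 2 ≤ 1) : 0 ≤ eval x q := by
  obtain ⟨σ₀, σ₁, h₀, h₁, rfl⟩ := hq
  have e : eval x (1 - ∑ i, C (w i) * X i ^ 2) = 1 - ∑ i, w i * x i ^ 2 := by
    simp [map_sum]
  have := isSOS_eval_nonneg h₀ x
  have := isSOS_eval_nonneg h₁ x
  simp only [map_add, map_mul, e]
  nlinarith

lemma isSOS_const_sq {N r : ℕ} (c : ℝ) : IsSOS r (C (c^2) : MvPolynomial (Fin N) ℝ) :=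
  ⟨1, fun _ => C c, fun _ => by simp [totalDegree_C], by rw [Fin.sum_univ_one, ← C_pow]⟩

lemma isSOS_zero {N r : ℕ} : IsSOS r (0 : MvPolynomial (Fin N) ℝ) :=
  ⟨0, fun j => 0, fun j => by simp, by simp⟩

lemma sq_le_aux {N : ℕ} (w : Fin N → ℝ) (hw : ∀ i, 0 < w i) {x : Fin N → ℝ}
    (hx : ∑ i, w i * x i ^ 2 ≤ 1) (i : Fin N) : x i ^ 2 ≤ (w i)⁻¹ := by
  have h1 : w i * x i ^ 2 ≤ 1 :=
    le_trans (Finset.single_le_sum (f := fun j => w j * x j ^ 2)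
      (fun j _ => mul_nonneg (hw j).le (sq_nonneg _)) (Finset.mem_univ i)) hx
  rw [inv_eq_one_div, le_div_iff₀ (hw i), mul_comm]
  exact h1

lemma Kcompact {N : ℕ} (w : Fin N → ℝ) (hw : ∀ i, 0 < w i) :
    IsCompact {x : Fin N → ℝ | ∑ i, w i * x i ^ 2 ≤ 1} := by
  have hg : Continuous fun x : Fin N → ℝ => ∑ i, w i * x i ^ 2 :=
    continuous_finset_sum _ fun i _ => (continuous_const.mul ((continuous_apply i).pow 2))
  have hclosed : IsClosed {x : Fin N → ℝ | ∑ i, w i * x i ^ 2 ≤ 1} :=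
    isClosed_le hg continuous_const
  refine Metric.isCompact_of_isClosed_isBounded hclosed ?_
  refine (Metric.isBounded_iff_subset_closedBall 0).mpr ⟨Real.sqrt (∑ i, (w i)⁻¹), ?_⟩
  intro x hx
  simp only [Metric.mem_closedBall, dist_zero_right]
  refine pi_norm_le_iff_of_nonneg (Real.sqrt_nonneg _) |>.mpr fun i => ?_
  rw [Real.norm_eq_abs, ← Real.sqrt_sq_eq_abs]
  refine Real.sqrt_le_sqrt ?_
  refine le_trans (sq_le_aux w hw hx i) ?_
  exact Finset.single_le_sum (f := fun j => (w j)⁻¹)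
    (fun j _ => (inv_pos.mpr (hw j)).le) (Finset.mem_univ i)

lemma cont_integrable {N : ℕ} (K : Set (Fin N → ℝ)) (hKc : IsCompact K)
    (γ : Measure (Fin N → ℝ)) [IsFiniteMeasure γ] (hγ : γ Kᶜ = 0)
    (f : (Fin N → ℝ) → ℝ) (hf : Continuous f) : Integrable f γ := by
  obtain ⟨C, hC⟩ := hKc.exists_bound_of_continuousOn hf.continuousOn
  have haeK : ∀ᵐ x ∂γ, x ∈ K := by
    rw [ae_iff]
    simpa [Set.compl_def] using hγ
  refine ⟨hf.aestronglyMeasurable, HasFiniteIntegral.of_bounded (C := C) ?_⟩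
  filter_upwards [haeK] with x hx using hC x hx

set_option maxHeartbeats 2000000 in
/-- If `γ` is a finite Borel measure vanishing outside the ellipsoid
`K = {x : ∑ᵢ wᵢ xᵢ² ≤ 1}` whose topological support equals `K` (every open set meeting
`K` has positive measure), then the inner relaxation values converge to the global
minimum: `inf_r p^inn_r = min_{x ∈ K} p(x)`. -/
theorem inner_relaxation_convergence (N : ℕ) (hN : 0 < N)
    (w : Fin N → ℝ) (hw : ∀ i, 0 < w i)
    (K : Set (Fin N → ℝ)) (hK : K = {x | ∑ i, w i * x i ^ 2 ≤ 1})
    (p : MvPolynomial (Fin N) ℝ)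
    (γ : Measure (Fin N → ℝ)) [IsFiniteMeasure γ]
    (hγ : γ Kᶜ = 0)
    (hsupp : ∀ x ∈ K, ∀ U : Set (Fin N → ℝ), IsOpen U → x ∈ U → 0 < γ U) :
    ⨅ r : ℕ, pInn w p γ r = sInf {v | ∃ x ∈ K, v = eval x p} := by
  have hKc : IsCompact K := hK ▸ Kcompact w hw
  have hK0 : (0 : Fin N → ℝ) ∈ K := by simp [hK]
  have hKne : K.Nonempty := ⟨0, hK0⟩
  have hint : ∀ f : (Fin N → ℝ) → ℝ, Continuous f → Integrable f γ :=
    cont_integrable K hKc γ hγ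
  have haeK : ∀ᵐ x ∂γ, x ∈ K := by
    rw [ae_iff]; simpa [Set.compl_def] using hγ
  have hcont : ∀ p' : MvPolynomial (Fin N) ℝ, Continuous fun x => eval x p' :=
    fun p' => MvPolynomial.continuous_eval p'
  -- the minimizer
  obtain ⟨xs, hxs, hxsmin⟩ := hKc.exists_isMinOn hKne (hcont p).continuousOn
  set m := eval xs p with hm
  have hmin : ∀ x ∈ K, m ≤ eval x p := fun x hx => hxsmin hx
  have hSinf : sInf {v | ∃ x ∈ K, v = eval x p} = m := by
    apply le_antisymm
    · exact csInf_le ⟨m, fun v ⟨x, hx, hv⟩ => hv ▸ hmin x hx⟩ ⟨xs, hxs, rfl⟩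
    · exact le_csInf ⟨m, xs, hxs, rfl⟩ fun v ⟨x, hx, hv⟩ => hv ▸ hmin x hx
  rw [hSinf]
  -- positivity of total mass
  have hγu : 0 < γ Set.univ := hsupp 0 hK0 Set.univ isOpen_univ trivial
  set G := (γ Set.univ).toReal with hG
  have hGpos : 0 < G := ENNReal.toReal_pos hγu.ne' (measure_ne_top γ _)
  -- every feasible value is at least m
  have hlow : ∀ r : ℕ, ∀ v ∈ {v | ∃ σ ∈ Qmod w r, (∫ x, eval x σ ∂γ) = 1 ∧
      v = ∫ x, eval x p * eval x σ ∂γ}, m ≤ v := by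
    rintro r v ⟨σ, hσ, hσ1, rfl⟩
    have h1 : m = ∫ x, m * eval x σ ∂γ := by
      rw [integral_const_mul, hσ1, mul_one]
    rw [h1]
    refine integral_mono_ae (Integrable.const_mul (hint _ (hcont σ)) m)
      (hint _ ((hcont p).mul (hcont σ))) ?_
    filter_upwards [haeK] with x hx
    have hxK : ∑ i, w i * x i ^ 2 ≤ 1 := by rw [hK] at hx; exact hx
    have hσx : 0 ≤ eval x σ := qmod_eval_nonneg hσ hxK
    exact mul_le_mul_of_nonneg_right (hmin x hx) hσx
  -- each feasible set is nonempty
  have hne : ∀ r : ℕ, {v | ∃ σ ∈ Qmod w r, (∫ x, eval x σ ∂γ) = 1 ∧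
      v = ∫ x, eval x p * eval x σ ∂γ}.Nonempty := by
    intro r
    refine ⟨∫ x, eval x p * eval x (C (G⁻¹) : MvPolynomial (Fin N) ℝ) ∂γ,
      C G⁻¹, ?_, ?_, rfl⟩
    · refine ⟨C G⁻¹, 0, ?_, isSOS_zero, by ring⟩
      have : G⁻¹ = (Real.sqrt G⁻¹) ^ 2 := (Real.sq_sqrt (by positivity)).symm
      rw [this]
      exact isSOS_const_sq _
    · simp only [eval_C]
      rw [integral_const]
      simp [smul_eq_mul, ← hG, mul_inv_cancel₀ hGpos.ne']
      exact mul_inv_cancel₀ hGpos.ne'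
  have hpInn_ge : ∀ r, m ≤ pInn w p γ r := fun r => le_csInf (hne r) (hlow r)
  have hbdd : BddBelow (Set.range fun r => pInn w p γ r) := by
    refine ⟨m, ?_⟩
    rintro v ⟨r, rfl⟩
    exact hpInn_ge r
  apply le_antisymm
  · -- hard direction
    refine le_of_forall_pos_le_add fun ε hε => ?_
    -- geometry setup
    set S := ∑ i, (w i)⁻¹ with hSdef
    have hSpos : 0 < S := Finset.sum_pos (fun i _ => inv_pos.mpr (hw i))
      (Finset.univ_nonempty_iff.mpr (Fin.pos_iff_nonempty.mp hN))
    set M := 4 * S + 1 with hMdef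
    have hM1 : 1 < M := by rw [hMdef]; linarith
    set q : MvPolynomial (Fin N) ℝ := C M - ∑ i, (X i - C (xs i)) ^ 2 with hqdef
    have heq : ∀ x, eval x q = M - ∑ i, (x i - xs i) ^ 2 := by
      intro x
      simp [hqdef, map_sum]
    have hq1 : ∀ x ∈ K, 1 ≤ eval x q := by
      intro x hx
      rw [heq]
      have hxK : ∑ i, w i * x i ^ 2 ≤ 1 := by rw [hK] at hx; exact hx
      have hxsK : ∑ i, w i * xs i ^ 2 ≤ 1 := by rw [hK] at hxs; exact hxs
      have hsum : ∑ i, (x i - xs i) ^ 2 ≤ 4 * S := by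
        calc ∑ i, (x i - xs i) ^ 2 ≤ ∑ i, (2 * x i ^ 2 + 2 * xs i ^ 2) :=
              Finset.sum_le_sum fun i _ => by nlinarith [sq_nonneg (x i + xs i)]
          _ ≤ ∑ i, 4 * (w i)⁻¹ := Finset.sum_le_sum fun i _ => by
              have h1 := sq_le_aux w hw hxK i
              have h2 := sq_le_aux w hw hxsK i
              linarith
          _ = 4 * S := by rw [hSdef, Finset.mul_sum]
      rw [hMdef]; linarith
    have hqM : ∀ x, eval x q ≤ M := fun x => by
      rw [heq]
      have : 0 ≤ ∑ i, (x i - xs i) ^ 2 := Finset.sum_nonneg fun i _ => sq_nonneg _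
      linarith
    have hqxs : eval xs q = M := by rw [heq]; simp
    -- open neighborhood where p is small
    set U : Set (Fin N → ℝ) := (fun x => eval x p) ⁻¹' Set.Iio (m + ε / 2) with hUdef
    have hU : IsOpen U := isOpen_Iio.preimage (hcont p)
    have hxsU : xs ∈ U := by
      simp only [hUdef, Set.mem_preimage, Set.mem_Iio]
      linarith
    -- bound for q away from the minimizer
    have hKU : IsCompact (K ∩ Uᶜ) := hKc.inter_right hU.isClosed_compl
    obtain ⟨b, hb0, hbM, hbb⟩ : ∃ b, 0 ≤ b ∧ b < M ∧ ∀ x ∈ K ∩ Uᶜ, eval x q ≤ b := by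
      rcases (K ∩ Uᶜ).eq_empty_or_nonempty with hemp | hne'
      · exact ⟨1, zero_le_one, hM1, by simp [hemp]⟩
      · obtain ⟨x₀, hx₀, hmax⟩ := hKU.exists_isMaxOn hne' (hcont q).continuousOn
        refine ⟨max 1 (eval x₀ q), le_trans zero_le_one (le_max_left _ _), max_lt hM1 ?_,
          fun x hx => le_trans (hmax hx) (le_max_right _ _)⟩
        have hx0ne : x₀ ≠ xs := by
          rintro rfl
          exact hx₀.2 hxsU
        obtain ⟨i, hi⟩ := Function.ne_iff.mp hx0ne
        have hpos : 0 < ∑ i, (x₀ i - xs i) ^ 2 := by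
          refine Finset.sum_pos' (fun j _ => sq_nonneg _) ⟨i, Finset.mem_univ i, ?_⟩
          have : x₀ i - xs i ≠ 0 := sub_ne_zero.mpr hi
          positivity
        rw [heq]
        linarith
    obtain ⟨a, hba, haM, ha0⟩ : ∃ a, b < a ∧ a < M ∧ 0 < a :=
      ⟨(b + M) / 2, by linarith, by linarith, by linarith⟩
    set V : Set (Fin N → ℝ) := (fun x => eval x q) ⁻¹' Set.Ioi a with hVdef
    have hV : IsOpen V := isOpen_Ioi.preimage (hcont q)
    have hxsV : xs ∈ V := by
      simp only [hVdef, Set.mem_preimage, Set.mem_Ioi, hqxs]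
      linarith
    set V0 := (γ V).toReal with hV0def
    have hV0 : 0 < V0 := ENNReal.toReal_pos (hsupp xs hxs V hV hxsV).ne' (measure_ne_top γ _)
    -- bound on p - m over K
    obtain ⟨C0, hC0⟩ :=
      hKc.exists_bound_of_continuousOn ((hcont p).sub continuous_const).continuousOn
    set Ch := max C0 0 with hChdef
    have hCh0 : 0 ≤ Ch := le_max_right _ _
    have hCh : ∀ x ∈ K, eval x p - m ≤ Ch := fun x hx =>
      le_trans (le_trans (le_abs_self _) (hC0 x hx)) (le_max_left _ _)
    -- choice of the exponent
    set t := b / a with htdef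
    have ht0 : 0 ≤ t := div_nonneg hb0 ha0.le
    have ht1 : t < 1 := (div_lt_one ha0).mpr hba
    set c0 := Ch * G / V0 with hc0def
    have hc00 : 0 ≤ c0 := by positivity
    obtain ⟨n, hn⟩ := exists_pow_lt_of_lt_one
      (show (0:ℝ) < (ε / 2) / (c0 + 1) by positivity) ht1
    have hkey : c0 * t ^ (2 * n) ≤ ε / 2 := by
      have h1 : t ^ (2 * n) ≤ t ^ n := pow_le_pow_of_le_one ht0 ht1.le (by omega)
      have h2 : c0 * t ^ n ≤ c0 * ((ε / 2) / (c0 + 1)) := mul_le_mul_of_nonneg_left hn.le hc00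
      have h3 : c0 * ((ε / 2) / (c0 + 1)) ≤ (c0 + 1) * ((ε / 2) / (c0 + 1)) :=
        mul_le_mul_of_nonneg_right (by linarith) (by positivity)
      have h4 : (c0 + 1) * ((ε / 2) / (c0 + 1)) = ε / 2 := by field_simp
      nlinarith [mul_le_mul_of_nonneg_left h1 hc00]
    -- the density
    set Qf : (Fin N → ℝ) → ℝ := fun x => eval x q ^ (2 * n) with hQfdef
    have hQfc : Continuous Qf := (hcont q).pow _
    have hQf0 : ∀ x, 0 ≤ Qf x := fun x => (even_two_mul n).pow_nonneg _
    set T := ∫ x, Qf x ∂γ with hTdef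
    have hTV : a ^ (2 * n) * V0 ≤ T := by
      have h1 : ∫ x in V, Qf x ∂γ ≤ T :=
        setIntegral_le_integral (hint Qf hQfc) (Filter.Eventually.of_forall hQf0)
      have h2 : ∫ x in V, (a ^ (2 * n) : ℝ) ∂γ ≤ ∫ x in V, Qf x ∂γ := by
        refine setIntegral_mono_on (integrableOn_const (measure_ne_top γ V))
          ((hint Qf hQfc).integrableOn) hV.measurableSet fun x hx => ?_
        have hax : a < eval x q := hx
        exact pow_le_pow_left₀ ha0.le hax.le _
      calc a ^ (2 * n) * V0 = (γ V).toReal • (a ^ (2 * n) : ℝ) := by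
            rw [smul_eq_mul, hV0def]; ring
        _ = ∫ x in V, (a ^ (2 * n) : ℝ) ∂γ := (setIntegral_const _).symm
        _ ≤ ∫ x in V, Qf x ∂γ := h2
        _ ≤ T := h1
    have hT : 0 < T := lt_of_lt_of_le (by positivity) hTV
    -- the SOS certificate
    set σ : MvPolynomial (Fin N) ℝ := C T⁻¹ * q ^ (2 * n) with hσdef
    have hdeg : q.totalDegree ≤ 2 := by
      rw [hqdef]
      refine le_trans (totalDegree_sub _ _) (max_le (by simp [totalDegree_C]) ?_)
      refine le_trans (totalDegree_finset_sum _ _) (Finset.sup_le fun i _ => ?_)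
      refine le_trans (totalDegree_pow _ _) ?_
      have : (X i - C (xs i) : MvPolynomial (Fin N) ℝ).totalDegree ≤ 1 :=
        le_trans (totalDegree_sub _ _) (max_le (totalDegree_X i).le (by simp [totalDegree_C]))
      omega
    have hσQ : σ ∈ Qmod w (2 * n) := by
      refine ⟨σ, 0, ?_, isSOS_zero, by rw [zero_mul, add_zero]⟩
      refine ⟨1, fun _ => C (Real.sqrt T⁻¹) * q ^ n, fun j => ?_, ?_⟩
      · refine le_trans (totalDegree_mul _ _) ?_
        have h1 : (C (Real.sqrt T⁻¹) : MvPolynomial (Fin N) ℝ).totalDegree = 0 :=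
          totalDegree_C _
        have h2 : (q ^ n).totalDegree ≤ n * q.totalDegree := totalDegree_pow _ _
        have h3 : (q ^ n).totalDegree ≤ n * 2 :=
          le_trans h2 (Nat.mul_le_mul_left n hdeg)
        omega
      · rw [Fin.sum_univ_one, mul_pow, ← C_pow, Real.sq_sqrt (inv_nonneg.mpr hT.le),
          ← pow_mul, mul_comm n 2, hσdef]
    have heσ : ∀ x, eval x σ = T⁻¹ * Qf x := fun x => by
      simp [hσdef, hQfdef]
    have hσ1 : (∫ x, eval x σ ∂γ) = 1 := by
      simp only [heσ]
      rw [integral_const_mul, ← hTdef, inv_mul_cancel₀ hT.ne']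
    -- the estimate
    set h : (Fin N → ℝ) → ℝ := fun x => eval x p - m with hhdef
    have hhc : Continuous h := (hcont p).sub continuous_const
    set I := ∫ x, h x * Qf x ∂γ with hIdef
    have hIsplit : I = (∫ x in U, h x * Qf x ∂γ) + ∫ x in Uᶜ, h x * Qf x ∂γ :=
      (integral_add_compl hU.measurableSet (hint _ (hhc.mul hQfc))).symm
    have hI1 : (∫ x in U, h x * Qf x ∂γ) ≤ ε / 2 * T := by
      have h1 : (∫ x in U, h x * Qf x ∂γ) ≤ ∫ x in U, ε / 2 * Qf x ∂γ := by
        refine setIntegral_mono_on ((hint _ (hhc.mul hQfc)).integrableOn)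
          ((hint _ (continuous_const.mul hQfc)).integrableOn) hU.measurableSet fun x hx => ?_
        have hxU : eval x p < m + ε / 2 := hx
        have : h x ≤ ε / 2 := by rw [hhdef]; dsimp only; linarith
        exact mul_le_mul_of_nonneg_right this (hQf0 x)
      have h2 : ∫ x in U, ε / 2 * Qf x ∂γ = ε / 2 * ∫ x in U, Qf x ∂γ := integral_const_mul _ _
      have h3 : ∫ x in U, Qf x ∂γ ≤ T :=
        setIntegral_le_integral (hint Qf hQfc) (Filter.Eventually.of_forall hQf0)
      rw [h2] at h1
      exact le_trans h1 (mul_le_mul_of_nonneg_left h3 (by linarith))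
    have hI2 : (∫ x in Uᶜ, h x * Qf x ∂γ) ≤ Ch * b ^ (2 * n) * G := by
      have h1 : (∫ x in Uᶜ, h x * Qf x ∂γ) ≤ ∫ x in Uᶜ, (Ch * b ^ (2 * n) : ℝ) ∂γ := by
        refine integral_mono_ae ((hint _ (hhc.mul hQfc)).integrableOn)
          (integrable_const _) ?_
        filter_upwards [ae_restrict_of_ae haeK, ae_restrict_mem hU.measurableSet.compl]
          with x hx hxU
        have hq0 : 0 ≤ eval x q := le_trans zero_le_one (hq1 x hx)
        have hqb : eval x q ≤ b := hbb x ⟨hx, hxU⟩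
        have h5 : Qf x ≤ b ^ (2 * n) := pow_le_pow_left₀ hq0 hqb _
        have h6 : 0 ≤ h x := by rw [hhdef]; dsimp only; linarith [hmin x hx]
        exact mul_le_mul (hCh x hx) h5 (hQf0 x) hCh0
      have h2 : ∫ x in Uᶜ, (Ch * b ^ (2 * n) : ℝ) ∂γ = (γ Uᶜ).toReal * (Ch * b ^ (2 * n)) := by
        rw [setIntegral_const, smul_eq_mul]
        rfl
      have h3 : (γ Uᶜ).toReal ≤ G :=
        ENNReal.toReal_mono (measure_ne_top γ _) (measure_mono (Set.subset_univ _))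
      rw [h2] at h1
      refine le_trans h1 ?_
      have : 0 ≤ Ch * b ^ (2 * n) := by positivity
      nlinarith
    -- the value of the relaxation at σ
    have hval : (∫ x, eval x p * eval x σ ∂γ) = m + T⁻¹ * I := by
      have e1 : ∀ x, eval x p * eval x σ = T⁻¹ * (h x * Qf x + m * Qf x) := fun x => by
        rw [heσ, hhdef]; dsimp only; ring
      simp only [e1]
      rw [integral_const_mul,
        integral_add (f := fun x => h x * Qf x) (g := fun x => m * Qf x) (hint _ (hhc.mul hQfc)) ((hint _ hQfc).const_mul m),
        integral_const_mul, ← hIdef, ← hTdef]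
      field_simp
      ring
    have hfinal : (∫ x, eval x p * eval x σ ∂γ) ≤ m + ε := by
      rw [hval]
      have hI : I ≤ ε / 2 * T + Ch * b ^ (2 * n) * G := by
        rw [hIsplit]; linarith
      have h7 : T⁻¹ * I ≤ T⁻¹ * (ε / 2 * T + Ch * b ^ (2 * n) * G) :=
        mul_le_mul_of_nonneg_left hI (inv_nonneg.mpr hT.le)
      have h8 : T⁻¹ * (ε / 2 * T) = ε / 2 := by field_simp
      have h9 : T⁻¹ * (Ch * b ^ (2 * n) * G) ≤ Ch * b ^ (2 * n) * G / (a ^ (2 * n) * V0) := by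
        rw [inv_mul_eq_div]
        exact div_le_div_of_nonneg_left (by positivity) (by positivity) hTV
      have h10 : Ch * b ^ (2 * n) * G / (a ^ (2 * n) * V0) = c0 * t ^ (2 * n) := by
        rw [hc0def, htdef, div_pow]
        field_simp
      have h11 : T⁻¹ * I ≤ ε / 2 + c0 * t ^ (2 * n) := by
        rw [mul_add] at h7
        rw [← h10]
        linarith
      linarith
    calc ⨅ r, pInn w p γ r ≤ pInn w p γ (2 * n) := ciInf_le hbdd _
      _ ≤ ∫ x, eval x p * eval x σ ∂γ := csInf_le ⟨m, hlow _⟩ ⟨σ, hσQ, hσ1, rfl⟩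
      _ ≤ m + ε := hfinal
  · exact le_ciInf hpInn_ge
end
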